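/- arXiv:2605.12121 — 4 statements merged into one kernel-verified Lean document; each statement's English description precedes it below -/
import Mathlib

section
/- If W is a reflexive Banach space, Y is a Banach space, and Ψ : W → L¹([0,1];Y) is a bounded linear operator, then the image Ψ(B_W) of the closed unit ball of W is uniformly integrable in L¹([0,1];Y), i.e., for every sequence (Eₙ) of measurable subsets of [0,1] with |Eₙ| → 0 one has sup_{w ∈ B_W} ∫_{Eₙ} ‖(Ψw)(t)‖_Y dt → 0. -/
open MeasureTheory Filter Topology

open Set
open scoped ENNReal

set_option maxHeartbeats 2000000


open scoped ENNReal
open Set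

lemma my_partition (A : Set ℕ) (hA : A.Infinite) :
    ∃ N : ℕ → Set ℕ, (∀ i, (N i).Infinite) ∧ (∀ i, N i ⊆ A) ∧
      Pairwise (Function.onFun Disjoint N) := by
  classical
  set e : ℕ → ℕ := Nat.nth (· ∈ A) with he
  have hmem : ∀ n, e n ∈ A := fun n => Nat.nth_mem_of_infinite hA n
  have hinj : Function.Injective e := (Nat.nth_injective hA)
  refine ⟨fun i => Set.range (fun m => e (Nat.pair i m)), ?_, ?_, ?_⟩
  · intro i
    apply Set.infinite_range_of_injective
    intro a b hab
    have := hinj hab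
    simpa using (Nat.pair_eq_pair.mp this).2
  · rintro i x ⟨m, rfl⟩; exact hmem _
  · intro i j hij
    rw [Function.onFun, Set.disjoint_left]
    rintro x ⟨m, rfl⟩ ⟨m', hm'⟩
    have := hinj hm'
    exact hij ((Nat.pair_eq_pair.mp this).1).symm

lemma rosenthal (ℓ : ℕ → ℕ → ℝ≥0∞) (C : ℝ≥0∞) (hC : C ≠ ⊤)
    (hrow : ∀ k, ∑' j, ℓ k j ≤ C) (δ : ℝ≥0∞) (hδ : δ ≠ 0) :
    ∃ M : Set ℕ, M.Infinite ∧ ∀ k ∈ M, ∑' j, (M \ {k}).indicator (ℓ k) j ≤ δ := by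
  classical
  by_contra hno
  push_neg at hno
  -- hno : ∀ M, M.Infinite → ∃ k ∈ M, δ < ∑' j, (M \ {k}).indicator (ℓ k) j
  set Inv : ℕ → Set ℕ → Prop := fun s A =>
    A.Infinite ∧ ∀ k ∈ A, ∃ D : Set ℕ, D ∩ A = ∅ ∧ s • δ ≤ ∑' j, D.indicator (ℓ k) j with hInv
  have step : ∀ s (A : Set ℕ), Inv s A → ∃ A', Inv (s+1) A' := by
    intro s A ⟨hAinf, hAbd⟩
    obtain ⟨N, hNinf, hNsub, hNdisj⟩ := my_partition A hAinf
    choose k hkmem hkbd using fun i => hno (N i) (hNinf i)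
    have hkinj : Function.Injective k := by
      intro i j hij
      by_contra hne
      exact (hNdisj hne).ne_of_mem (hkmem i) (hij ▸ hkmem j) rfl
    refine ⟨Set.range k, Set.infinite_range_of_injective hkinj, ?_⟩
    rintro x ⟨i, rfl⟩
    obtain ⟨D, hDdisj, hDbd⟩ := hAbd (k i) (hNsub i (hkmem i))
    refine ⟨D ∪ (N i \ {k i}), ?_, ?_⟩
    · rw [Set.eq_empty_iff_forall_notMem]
      rintro x ⟨hx1, j, rfl⟩
      rcases hx1 with hx | ⟨hxN, hxne⟩
      · have : k j ∈ D ∩ A := ⟨hx, hNsub j (hkmem j)⟩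
        rw [hDdisj] at this; exact this
      · have hij : j = i := by
          by_contra hne
          exact (hNdisj hne).ne_of_mem (hkmem j) hxN rfl
        exact hxne (by simp [hij])
    · have hdisj : Disjoint D (N i \ {k i}) := by
        rw [Set.disjoint_left]
        intro x hxD hxN
        have : x ∈ D ∩ A := ⟨hxD, hNsub i hxN.1⟩
        rw [hDdisj] at this; exact this
      rw [Set.indicator_union_of_disjoint hdisj]
      rw [ENNReal.tsum_add, succ_nsmul]
      exact add_le_add hDbd (le_of_lt (hkbd i))
  have hex : ∀ s, ∃ A, Inv s A := by
    intro s
    induction s with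
    | zero => exact ⟨Set.univ, Set.infinite_univ, fun k _ => ⟨∅, by simp, by simp⟩⟩
    | succ s ih => obtain ⟨A, hA⟩ := ih; exact step s A hA
  -- choose s with C < s • δ
  obtain ⟨s, hs⟩ := ENNReal.exists_nat_gt (show C / δ ≠ ⊤ from
    (ENNReal.div_lt_top hC hδ).ne)
  have hsδ : C < s • δ := by
    rw [nsmul_eq_mul]
    rwa [ENNReal.div_lt_iff (Or.inl hδ) (Or.inr hC)] at hs
  obtain ⟨A, hAinf, hAbd⟩ := hex s
  obtain ⟨x, hx⟩ := hAinf.nonempty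
  obtain ⟨D, _, hDbd⟩ := hAbd x hx
  have : s • δ ≤ C := hDbd.trans ((ENNReal.tsum_le_tsum
    (fun j => Set.indicator_le_self _ _ j)).trans (hrow x))
  exact absurd hsδ (not_lt.mpr this)

open MeasureTheory Filter Topology Set

lemma cluster_le_of_eventually_le {y : ℕ → ℝ} {r c : ℝ}
    (h : ClusterPt r (Filter.map y Filter.atTop)) (hy : ∀ᶠ k in Filter.atTop, y k ≤ c) :
    r ≤ c := by
  have h1 : Filter.map y Filter.atTop ≤ Filter.principal (Set.Iic c) := by
    rwa [Filter.le_principal_iff, Filter.mem_map]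
  have h2 : ClusterPt r (Filter.principal (Set.Iic c)) := h.mono h1
  have h3 := mem_closure_iff_clusterPt.mpr h2
  rwa [closure_Iic] at h3

lemma cluster_ge_of_eventually_ge {y : ℕ → ℝ} {r c : ℝ}
    (h : ClusterPt r (Filter.map y Filter.atTop)) (hy : ∀ᶠ k in Filter.atTop, c ≤ y k) :
    c ≤ r := by
  have h1 : Filter.map y Filter.atTop ≤ Filter.principal (Set.Ici c) := by
    rwa [Filter.le_principal_iff, Filter.mem_map]
  have h2 : ClusterPt r (Filter.principal (Set.Ici c)) := h.mono h1
  have h3 := mem_closure_iff_clusterPt.mpr h2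
  rwa [closure_Ici] at h3

lemma norming {Y : Type*} [NormedAddCommGroup Y] [NormedSpace ℝ Y]
    {μ : Measure ℝ} {f : ℝ → Y} (hf : Integrable f μ) {B : Set ℝ} (hB : MeasurableSet B)
    {δ : ℝ} (hδ : 0 < δ) :
    ∃ g : ℝ → (Y →L[ℝ] ℝ), StronglyMeasurable g ∧ (∀ t, ‖g t‖ ≤ 1) ∧
      ∫ t in B, ‖f t‖ ∂μ - δ ≤ ∫ t in B, g t (f t) ∂μ := by
  classical
  have hf1 : MemLp f 1 μ := memLp_one_iff_integrable.mpr hf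
  obtain ⟨s, hs, hsmem⟩ := hf1.exists_simpleFunc_eLpNorm_sub_lt (by norm_num)
    (show ENNReal.ofReal (δ/2) ≠ 0 by simp [hδ, (by linarith : (0:ℝ) < δ/2)])
  have hs_int : Integrable s μ := memLp_one_iff_integrable.mp hsmem
  have hfs_int : Integrable (fun t => f t - s t) μ := hf.sub hs_int
  -- ∫ ‖f - s‖ ≤ δ/2
  have hdist : ∫ t, ‖f t - s t‖ ∂μ ≤ δ / 2 := by
    have h1 : ENNReal.ofReal (∫ t, ‖f t - s t‖ ∂μ)
        = ∫⁻ t, ‖f t - s t‖₊ ∂μ := ofReal_integral_norm_eq_lintegral_enorm hfs_int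
    have h2 : eLpNorm (f - ⇑s) 1 μ = ∫⁻ t, ‖f t - s t‖₊ ∂μ := by
      rw [eLpNorm_one_eq_lintegral_enorm]; rfl
    have h3 : ENNReal.ofReal (∫ t, ‖f t - s t‖ ∂μ) < ENNReal.ofReal (δ/2) := by
      rw [h1, ← h2]; exact hs
    have h4 := (ENNReal.ofReal_lt_ofReal_iff (by linarith)).mp h3
    linarith
  set θ : Y → (Y →L[ℝ] ℝ) := fun y => Classical.choose (exists_dual_vector'' ℝ y) with hθ
  have hθ1 : ∀ y, ‖θ y‖ ≤ 1 := fun y => (Classical.choose_spec (exists_dual_vector'' ℝ y)).1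
  have hθ2 : ∀ y, θ y y = ‖y‖ := fun y => (Classical.choose_spec (exists_dual_vector'' ℝ y)).2
  refine ⟨fun t => θ (s t), ?_, fun t => hθ1 _, ?_⟩
  · exact (s.map θ).stronglyMeasurable
  -- pairing integrability
  have hpair_meas : AEStronglyMeasurable (fun t => θ (s t) (f t)) μ := by
    exact isBoundedBilinearMap_apply.continuous.comp_aestronglyMeasurable
      (((s.map θ).stronglyMeasurable.aestronglyMeasurable).prodMk hf.1)
  have hpair_int : Integrable (fun t => θ (s t) (f t)) μ := by
    refine Integrable.mono hf.norm hpair_meas ?_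
    filter_upwards with t
    calc ‖θ (s t) (f t)‖ ≤ ‖θ (s t)‖ * ‖f t‖ := (θ (s t)).le_opNorm _
    _ ≤ 1 * ‖f t‖ := by
        apply mul_le_mul_of_nonneg_right (hθ1 _) (norm_nonneg _)
    _ = ‖(fun t => ‖f t‖) t‖ := by simp
  have hpair_s_meas : AEStronglyMeasurable (fun t => θ (s t) (s t)) μ := by
    exact isBoundedBilinearMap_apply.continuous.comp_aestronglyMeasurable
      (((s.map θ).stronglyMeasurable.aestronglyMeasurable).prodMk
        s.stronglyMeasurable.aestronglyMeasurable)
  have hpair_s_int : Integrable (fun t => θ (s t) (s t)) μ := by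
    refine Integrable.mono hs_int.norm hpair_s_meas ?_
    filter_upwards with t
    calc ‖θ (s t) (s t)‖ ≤ ‖θ (s t)‖ * ‖s t‖ := (θ (s t)).le_opNorm _
    _ ≤ 1 * ‖s t‖ := mul_le_mul_of_nonneg_right (hθ1 _) (norm_nonneg _)
    _ = ‖(fun t => ‖s t‖) t‖ := by simp
  have hpair_d_int : Integrable (fun t => θ (s t) (f t - s t)) μ :=
    (hpair_int.sub hpair_s_int).congr (by filter_upwards with t; simp [map_sub])
  have key1 : ∫ t in B, θ (s t) (f t) ∂μ
      = ∫ t in B, θ (s t) (s t) ∂μ + ∫ t in B, θ (s t) (f t - s t) ∂μ := by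
    rw [← integral_add hpair_s_int.integrableOn hpair_d_int.integrableOn]
    apply integral_congr_ae
    filter_upwards with t
    simp [map_sub]
  have key2 : ∫ t in B, θ (s t) (s t) ∂μ = ∫ t in B, ‖s t‖ ∂μ := by
    apply integral_congr_ae
    filter_upwards with t
    exact hθ2 _
  have key3 : |∫ t in B, θ (s t) (f t - s t) ∂μ| ≤ δ / 2 := by
    have h1 : |∫ t in B, θ (s t) (f t - s t) ∂μ| ≤ ∫ t in B, ‖θ (s t) (f t - s t)‖ ∂μ := by
      rw [← Real.norm_eq_abs]
      exact norm_integral_le_integral_norm _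
    have h2 : ∫ t in B, ‖θ (s t) (f t - s t)‖ ∂μ ≤ ∫ t in B, ‖f t - s t‖ ∂μ := by
      apply integral_mono hpair_d_int.norm.integrableOn hfs_int.norm.integrableOn
      intro t
      calc ‖θ (s t) (f t - s t)‖ ≤ ‖θ (s t)‖ * ‖f t - s t‖ := (θ (s t)).le_opNorm _
      _ ≤ 1 * ‖f t - s t‖ := mul_le_mul_of_nonneg_right (hθ1 _) (norm_nonneg _)
      _ = ‖f t - s t‖ := one_mul _
    have h3 : ∫ t in B, ‖f t - s t‖ ∂μ ≤ ∫ t, ‖f t - s t‖ ∂μ :=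
      setIntegral_le_integral hfs_int.norm (by filter_upwards with t using norm_nonneg _)
    linarith
  have key4 : ∫ t in B, ‖f t‖ ∂μ ≤ ∫ t in B, ‖s t‖ ∂μ + δ / 2 := by
    have h1 : ∫ t in B, ‖f t‖ ∂μ ≤ ∫ t in B, (‖s t‖ + ‖f t - s t‖) ∂μ := by
      apply integral_mono hf.norm.integrableOn
        (hs_int.norm.integrableOn.add hfs_int.norm.integrableOn)
      intro t
      have : f t = s t + (f t - s t) := by abel
      calc ‖f t‖ = ‖s t + (f t - s t)‖ := by rw [← this]
      _ ≤ ‖s t‖ + ‖f t - s t‖ := norm_add_le _ _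
    rw [integral_add hs_int.norm.integrableOn hfs_int.norm.integrableOn] at h1
    have h3 : ∫ t in B, ‖f t - s t‖ ∂μ ≤ ∫ t, ‖f t - s t‖ ∂μ :=
      setIntegral_le_integral hfs_int.norm (by filter_upwards with t using norm_nonneg _)
    linarith
  have habs := abs_le.mp key3
  show ∫ t in B, ‖f t‖ ∂μ - δ ≤ ∫ t in B, θ (s t) (f t) ∂μ
  rw [key1, key2]
  linarith


/-- If `W` is a reflexive Banach space, `Y` a Banach space and
`Ψ : W → L¹([0,1];Y)` a bounded linear operator, then the image of the closed unit ball
of `W` under `Ψ` is uniformly integrable. -/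
theorem stmt_0
    (W : Type*) [NormedAddCommGroup W] [NormedSpace ℝ W] [CompleteSpace W]
    (Y : Type*) [NormedAddCommGroup Y] [NormedSpace ℝ Y] [CompleteSpace Y]
    (hrefl : Function.Surjective (NormedSpace.inclusionInDoubleDual ℝ W))
    (μ : Measure ℝ) (hμ : μ = volume.restrict (Set.Icc (0:ℝ) 1))
    (Ψ : W →L[ℝ] Lp Y 1 μ) :
    ∀ E : ℕ → Set ℝ, (∀ n, MeasurableSet (E n)) → (∀ n, E n ⊆ Set.Icc (0:ℝ) 1) →
      Tendsto (fun n => μ (E n)) atTop (𝓝 0) →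
      ∀ ε > (0:ℝ), ∃ N : ℕ, ∀ n ≥ N, ∀ w : W, ‖w‖ ≤ 1 →
        ∫ t in E n, ‖(Ψ w : ℝ → Y) t‖ ∂μ ≤ ε := by
  classical
  intro E hEmeas hEsub hEtend ε hε
  by_contra hcon
  push_neg at hcon
  set δ : ℝ := ε / 8 with hδdef
  have hδpos : 0 < δ := by positivity
  -- basic facts
  have hInt : ∀ u : W, Integrable (fun t => (Ψ u : ℝ → Y) t) μ :=
    fun u => L1.integrable_coeFn (Ψ u)
  have hIntNorm : ∀ u : W, Integrable (fun t => ‖(Ψ u : ℝ → Y) t‖) μ := fun u => (hInt u).norm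
  have hL1 : ∀ u : W, ∫ t, ‖(Ψ u : ℝ → Y) t‖ ∂μ ≤ ‖Ψ‖ * ‖u‖ := by
    intro u
    have h1 : ‖Ψ u‖ = ∫ t, ‖(Ψ u : ℝ → Y) t‖ ∂μ := L1.norm_eq_integral_norm (Ψ u)
    rw [← h1]
    exact Ψ.le_opNorm u
  -- Phase A : pick witnesses with small measure
  have hsmall : ∀ c : ℝ≥0∞, c ≠ 0 → ∃ N : ℕ, ∀ n ≥ N, μ (E n) ≤ c := by
    intro c hc
    have h1 : ∀ᶠ n in atTop, μ (E n) < c := hEtend.eventually_lt_const (pos_iff_ne_zero.mpr hc)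
    obtain ⟨N, hN⟩ := eventually_atTop.mp h1
    exact ⟨N, fun n hn => (hN n hn).le⟩
  have hpick : ∀ k : ℕ, ∃ q : ℕ × W, μ (E q.1) ≤ 2⁻¹ ^ k ∧ ‖q.2‖ ≤ 1 ∧
      ε < ∫ t in E q.1, ‖(Ψ q.2 : ℝ → Y) t‖ ∂μ := by
    intro k
    obtain ⟨N, hN⟩ := hsmall (2⁻¹ ^ k) (by simp)
    obtain ⟨m, hm, w, hw1, hw2⟩ := hcon N
    exact ⟨(m, w), hN m hm, hw1, hw2⟩
  choose q hq1 hq2 hq3 using hpick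
  set A : ℕ → Set ℝ := fun k => E (q k).1 with hAdef
  set v : ℕ → W := fun k => (q k).2 with hvdef
  set F : ℕ → ℝ → Y := fun k => (fun t => (Ψ (v k) : ℝ → Y) t) with hFdef
  have hAmeas : ∀ k, MeasurableSet (A k) := fun k => hEmeas _
  have hA3 : ∀ k, ε < ∫ t in A k, ‖F k t‖ ∂μ := fun k => hq3 k
  -- tail unions have small measure
  have hUmeas : ∀ J : ℕ, μ (⋃ l ∈ Set.Ici J, A l) ≤ 2⁻¹ ^ J * 2 := by
    intro J
    have heq : (⋃ l ∈ Set.Ici J, A l) = ⋃ i : ℕ, A (J + i) := by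
      ext t
      simp only [Set.mem_iUnion, Set.mem_Ici]
      constructor
      · rintro ⟨l, hl, ht⟩
        exact ⟨l - J, by rwa [Nat.add_sub_cancel' hl]⟩
      · rintro ⟨i, ht⟩
        exact ⟨J + i, Nat.le_add_right _ _, ht⟩
    rw [heq]
    calc μ (⋃ i : ℕ, A (J + i)) ≤ ∑' i : ℕ, μ (A (J + i)) := measure_iUnion_le _
    _ ≤ ∑' i : ℕ, 2⁻¹ ^ (J + i) := ENNReal.tsum_le_tsum (fun i => hq1 (J + i))
    _ = 2⁻¹ ^ J * ∑' i : ℕ, 2⁻¹ ^ i := by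
        rw [← ENNReal.tsum_mul_left]
        exact tsum_congr fun i => (pow_add _ _ _)
    _ = 2⁻¹ ^ J * 2 := by
        rw [ENNReal.tsum_geometric]
        norm_num
  have hUtend : Tendsto (fun J => μ (⋃ l ∈ Set.Ici J, A l)) atTop (𝓝 0) := by
    have h2 : Tendsto (fun J : ℕ => (2⁻¹ : ℝ≥0∞) ^ J * 2) atTop (𝓝 0) := by
      have := ENNReal.tendsto_pow_atTop_nhds_zero_of_lt_one
        (show (2⁻¹ : ℝ≥0∞) < 1 by simp [ENNReal.inv_lt_one])
      have h3 := ENNReal.Tendsto.mul_const this (Or.inr (by norm_num : (2:ℝ≥0∞) ≠ ⊤))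
      simpa using h3
    exact tendsto_of_tendsto_of_tendsto_of_le_of_le tendsto_const_nhds h2
      (fun J => zero_le) hUmeas
  -- thresholds
  have hthr : ∀ k : ℕ, ∃ J0 : ℕ, ∀ J ≥ J0, ∫ t in ⋃ l ∈ Set.Ici J, A l, ‖F k t‖ ∂μ ≤ δ := by
    intro k
    have h1 : Tendsto (fun J => ∫ t in ⋃ l ∈ Set.Ici J, A l, ‖F k t‖ ∂μ) atTop (𝓝 0) :=
      (hIntNorm (v k)).tendsto_setIntegral_nhds_zero hUtend
    have h2 : ∀ᶠ J in atTop, ∫ t in ⋃ l ∈ Set.Ici J, A l, ‖F k t‖ ∂μ < δ :=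
      h1.eventually_lt_const hδpos
    obtain ⟨J0, hJ0⟩ := eventually_atTop.mp h2
    exact ⟨J0, fun J hJ => (hJ0 J hJ).le⟩
  choose J0 hJ0 using hthr
  -- the increasing selection
  set a : ℕ → ℕ := fun m => Nat.rec 0 (fun m am => max (am + 1) (J0 am)) m with hadef
  have ha_succ : ∀ m, a (m + 1) = max (a m + 1) (J0 (a m)) := fun m => rfl
  have ha_mono : StrictMono a := strictMono_nat_of_lt_succ (fun m => by
    rw [ha_succ]; exact lt_of_lt_of_le (Nat.lt_succ_self _) (le_max_left _ _))
  have hTailInt : ∀ m, ∫ t in ⋃ l ∈ Set.Ici (a (m+1)), A l, ‖F (a m) t‖ ∂μ ≤ δ := by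
    intro m
    apply hJ0 (a m)
    rw [ha_succ]
    exact le_max_right _ _
  -- disjointified sets
  set B : ℕ → Set ℝ := fun m => A (a m) \ ⋃ (l : ℕ) (_ : m < l), A (a l) with hBdef
  have hBmeas : ∀ m, MeasurableSet (B m) :=
    fun m => (hAmeas _).diff (MeasurableSet.iUnion fun l => MeasurableSet.iUnion fun _ => hAmeas _)
  have hBdisj' : ∀ m m' : ℕ, m < m' → Disjoint (B m) (B m') := by
    intro m m' hmm
    rw [Set.disjoint_left]
    rintro t ⟨ht1, ht2⟩ ht3
    exact ht2 (Set.mem_iUnion.mpr ⟨m', Set.mem_iUnion.mpr ⟨hmm, ht3.1⟩⟩)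
  have hBdisj : Pairwise (Function.onFun Disjoint B) := by
    intro m m' hne
    rcases lt_or_gt_of_ne hne with h | h
    · exact hBdisj' m m' h
    · exact (hBdisj' m' m h).symm
  have hUsub : ∀ m, (⋃ (l : ℕ) (_ : m < l), A (a l)) ⊆ ⋃ l ∈ Set.Ici (a (m+1)), A l := by
    intro m t ht
    obtain ⟨l, hl, htl⟩ := by
      simpa only [Set.mem_iUnion] using ht
    refine Set.mem_biUnion ?_ htl
    exact Set.mem_Ici.mpr (ha_mono.monotone (Nat.succ_le_of_lt hl))
  have hBtail : ∀ m, ∫ t in ⋃ (l : ℕ) (_ : m < l), A (a l), ‖F (a m) t‖ ∂μ ≤ δ := by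
    intro m
    refine le_trans ?_ (hTailInt m)
    apply setIntegral_mono_set ((hIntNorm _).integrableOn)
      (Filter.Eventually.of_forall fun t => norm_nonneg _)
    exact Filter.Eventually.of_forall (hUsub m)
  have hBdiag : ∀ m, ε - δ ≤ ∫ t in B m, ‖F (a m) t‖ ∂μ := by
    intro m
    set U := ⋃ (l : ℕ) (_ : m < l), A (a l) with hUdef
    have hUme : MeasurableSet U := MeasurableSet.iUnion fun l => MeasurableSet.iUnion fun _ => hAmeas _
    have hsplit : A (a m) = B m ∪ (A (a m) ∩ U) := (Set.diff_union_inter _ _).symm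
    have hdisj : Disjoint (B m) (A (a m) ∩ U) := by
      rw [Set.disjoint_left]
      rintro t ⟨h1, h2⟩ ⟨h3, h4⟩
      exact h2 h4
    have h1 : ∫ t in A (a m), ‖F (a m) t‖ ∂μ
        = ∫ t in B m, ‖F (a m) t‖ ∂μ + ∫ t in A (a m) ∩ U, ‖F (a m) t‖ ∂μ := by
      conv_lhs => rw [hsplit]
      exact setIntegral_union hdisj ((hAmeas _).inter hUme)
        ((hIntNorm _).integrableOn) ((hIntNorm _).integrableOn)
    have h2 : ∫ t in A (a m) ∩ U, ‖F (a m) t‖ ∂μ ≤ δ := by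
      refine le_trans ?_ (hBtail m)
      apply setIntegral_mono_set ((hIntNorm _).integrableOn)
        (Filter.Eventually.of_forall fun t => norm_nonneg _)
      exact Filter.Eventually.of_forall (fun t ht => ht.2)
    have h3 := hA3 (a m)
    linarith
  -- Rosenthal's lemma application
  set C : ℝ≥0∞ := ENNReal.ofReal ‖Ψ‖ with hCdef
  set L : ℕ → ℕ → ℝ≥0∞ := fun m j => ∫⁻ t in B j, ‖F (a m) t‖₊ ∂μ with hLdef
  have hLreal : ∀ m j, ENNReal.ofReal (∫ t in B j, ‖F (a m) t‖ ∂μ) = L m j := by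
    intro m j
    exact ofReal_integral_norm_eq_lintegral_enorm ((hInt _).restrict)
  have hrow : ∀ m, ∑' j, L m j ≤ C := by
    intro m
    have h1 : ∑' j, L m j = ∫⁻ t in ⋃ j, B j, ‖F (a m) t‖₊ ∂μ :=
      (lintegral_iUnion hBmeas hBdisj _).symm
    rw [h1]
    have h2 : ∫⁻ t in ⋃ j, B j, ‖F (a m) t‖₊ ∂μ ≤ ∫⁻ t, ‖F (a m) t‖₊ ∂μ := by
      conv_rhs => rw [← Measure.restrict_univ (μ := μ)]
      exact lintegral_mono_set (Set.subset_univ _)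
    calc ∫⁻ t in ⋃ j, B j, ‖F (a m) t‖₊ ∂μ ≤ ∫⁻ t, ‖F (a m) t‖₊ ∂μ := h2
    _ = ENNReal.ofReal (∫ t, ‖F (a m) t‖ ∂μ) :=
      (ofReal_integral_norm_eq_lintegral_enorm (hInt _)).symm
    _ ≤ C := by
      apply ENNReal.ofReal_le_ofReal
      calc ∫ t, ‖F (a m) t‖ ∂μ ≤ ‖Ψ‖ * ‖v (a m)‖ := hL1 _
      _ ≤ ‖Ψ‖ * 1 := mul_le_mul_of_nonneg_left (hq2 _) (norm_nonneg _)
      _ = ‖Ψ‖ := mul_one _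
  have hLne : ∀ m j, L m j ≠ ⊤ := by
    intro m j
    exact ne_top_of_le_ne_top ENNReal.ofReal_ne_top ((ENNReal.le_tsum j).trans (hrow m))
  obtain ⟨M, hMinf, hMbd⟩ := rosenthal L C ENNReal.ofReal_ne_top hrow
    (ENNReal.ofReal δ) (ne_of_gt (ENNReal.ofReal_pos.mpr hδpos))
  -- enumerate M
  set e : ℕ → ℕ := Nat.nth (· ∈ M) with hedef
  have heinf : (setOf (· ∈ M)).Infinite := hMinf
  have he_mem : ∀ k, e k ∈ M := fun k => Nat.nth_mem_of_infinite heinf k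
  have he_mono : StrictMono e := Nat.nth_strictMono heinf
  have he_inj : Function.Injective e := he_mono.injective
  -- real form of the Rosenthal bound
  have hRos : ∀ (k : ℕ) (G : Finset ℕ), k ∉ G →
      ∑ j ∈ G, ∫ t in B (e j), ‖F (a (e k)) t‖ ∂μ ≤ δ := by
    intro k G hkG
    have h1 : ∀ j, ∫ t in B (e j), ‖F (a (e k)) t‖ ∂μ = (L (e k) (e j)).toReal := by
      intro j
      rw [← hLreal (e k) (e j), ENNReal.toReal_ofReal]
      exact integral_nonneg (fun t => norm_nonneg _)
    calc ∑ j ∈ G, ∫ t in B (e j), ‖F (a (e k)) t‖ ∂μ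
        = ∑ j ∈ G, (L (e k) (e j)).toReal := Finset.sum_congr rfl (fun j _ => h1 j)
    _ = (∑ j ∈ G, L (e k) (e j)).toReal := (ENNReal.toReal_sum (fun j _ => hLne _ _)).symm
    _ ≤ (ENNReal.ofReal δ).toReal := by
        apply ENNReal.toReal_mono ENNReal.ofReal_ne_top
        calc ∑ j ∈ G, L (e k) (e j)
            = ∑ j' ∈ G.image e, L (e k) j' := (Finset.sum_image (fun x _ y _ h => he_inj h)).symm
        _ = ∑ j' ∈ G.image e, (M \ {e k}).indicator (L (e k)) j' := by
            apply Finset.sum_congr rfl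
            intro j' hj'
            obtain ⟨j, hj, rfl⟩ := Finset.mem_image.mp hj'
            rw [Set.indicator_of_mem]
            exact ⟨he_mem j, fun hh => hkG (by rwa [he_inj hh] at hj)⟩
        _ ≤ ∑' j', (M \ {e k}).indicator (L (e k)) j' := ENNReal.sum_le_tsum _
        _ ≤ ENNReal.ofReal δ := hMbd (e k) (he_mem k)
    _ = δ := ENNReal.toReal_ofReal hδpos.le
  -- norming functionals on each B (e k)
  have hnorming : ∀ k : ℕ, ∃ g : ℝ → (Y →L[ℝ] ℝ), StronglyMeasurable g ∧ (∀ t, ‖g t‖ ≤ 1) ∧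
      ∫ t in B (e k), ‖F (a (e k)) t‖ ∂μ - δ ≤ ∫ t in B (e k), g t (F (a (e k)) t) ∂μ :=
    fun k => norming (hInt _) (hBmeas _) hδpos
  choose g hg1 hg2 hg3 using hnorming
  -- pairing integrability and bounds
  have hpair_int : ∀ (k : ℕ) (u : W), Integrable (fun t => g k t ((Ψ u : ℝ → Y) t)) μ := by
    intro k u
    refine Integrable.mono (hIntNorm u) ?_ ?_
    · exact isBoundedBilinearMap_apply.continuous.comp_aestronglyMeasurable
        ((hg1 k).aestronglyMeasurable.prodMk (hInt u).1)
    · filter_upwards with t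
      calc ‖g k t ((Ψ u : ℝ → Y) t)‖ ≤ ‖g k t‖ * ‖(Ψ u : ℝ → Y) t‖ := (g k t).le_opNorm _
      _ ≤ 1 * ‖(Ψ u : ℝ → Y) t‖ := mul_le_mul_of_nonneg_right (hg2 k t) (norm_nonneg _)
      _ = ‖(fun s => ‖(Ψ u : ℝ → Y) s‖) t‖ := by simp
  have hpair_bound : ∀ (k : ℕ) (u : W) (S : Set ℝ),
      |∫ t in S, g k t ((Ψ u : ℝ → Y) t) ∂μ| ≤ ∫ t in S, ‖(Ψ u : ℝ → Y) t‖ ∂μ := by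
    intro k u S
    rw [← Real.norm_eq_abs]
    refine (norm_integral_le_integral_norm _).trans ?_
    apply integral_mono (hpair_int k u).norm.integrableOn (hIntNorm u).integrableOn
    intro t
    dsimp only
    calc ‖g k t ((Ψ u : ℝ → Y) t)‖ ≤ ‖g k t‖ * ‖(Ψ u : ℝ → Y) t‖ := (g k t).le_opNorm _
    _ ≤ 1 * ‖(Ψ u : ℝ → Y) t‖ := mul_le_mul_of_nonneg_right (hg2 k t) (norm_nonneg _)
    _ = ‖(Ψ u : ℝ → Y) t‖ := one_mul _
  -- the continuous linear functionals ψ k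
  have hψadd : ∀ (k : ℕ) (u u' : W), ∫ t in B (e k), g k t ((Ψ (u + u') : ℝ → Y) t) ∂μ
      = ∫ t in B (e k), g k t ((Ψ u : ℝ → Y) t) ∂μ
        + ∫ t in B (e k), g k t ((Ψ u' : ℝ → Y) t) ∂μ := by
    intro k u u'
    rw [← integral_add (hpair_int k u).integrableOn (hpair_int k u').integrableOn]
    apply integral_congr_ae
    have h1 : (Ψ (u + u') : ℝ → Y) =ᵐ[μ] fun t => (Ψ u : ℝ → Y) t + (Ψ u' : ℝ → Y) t := by
      rw [map_add]
      exact Lp.coeFn_add _ _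
    filter_upwards [ae_restrict_of_ae h1] with t ht
    rw [ht, map_add]
  have hψsmul : ∀ (k : ℕ) (c : ℝ) (u : W), ∫ t in B (e k), g k t ((Ψ (c • u) : ℝ → Y) t) ∂μ
      = c * ∫ t in B (e k), g k t ((Ψ u : ℝ → Y) t) ∂μ := by
    intro k c u
    rw [← integral_const_mul]
    apply integral_congr_ae
    have h1 : (Ψ (c • u) : ℝ → Y) =ᵐ[μ] fun t => c • (Ψ u : ℝ → Y) t := by
      rw [_root_.map_smul]
      exact Lp.coeFn_smul _ _
    filter_upwards [ae_restrict_of_ae h1] with t ht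
    rw [ht, (g k t).map_smul]
    simp
  set ψl : ℕ → W →ₗ[ℝ] ℝ := fun k =>
    { toFun := fun u => ∫ t in B (e k), g k t ((Ψ u : ℝ → Y) t) ∂μ,
      map_add' := hψadd k, map_smul' := hψsmul k } with hψldef
  have hψlbound : ∀ (k : ℕ) (u : W), ‖ψl k u‖ ≤ ‖Ψ‖ * ‖u‖ := by
    intro k u
    rw [Real.norm_eq_abs]
    refine (hpair_bound k u _).trans ?_
    refine (setIntegral_le_integral (hIntNorm u)
      (Filter.Eventually.of_forall fun t => norm_nonneg _)).trans (hL1 u)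
  set ψ : ℕ → W →L[ℝ] ℝ := fun k => LinearMap.mkContinuous (ψl k) ‖Ψ‖ (hψlbound k) with hψdef
  have hψapp : ∀ (k : ℕ) (u : W), ψ k u = ∫ t in B (e k), g k t ((Ψ u : ℝ → Y) t) ∂μ :=
    fun k u => rfl
  -- summability
  have hDdisj : Pairwise (Function.onFun Disjoint (fun k => B (e k))) :=
    fun k k' hne => hBdisj (he_inj.ne hne)
  have hHasSum : ∀ u : W, HasSum (fun k => ∫ t in B (e k), ‖(Ψ u : ℝ → Y) t‖ ∂μ)
      (∫ t in ⋃ k, B (e k), ‖(Ψ u : ℝ → Y) t‖ ∂μ) :=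
    fun u => hasSum_integral_iUnion (fun k => hBmeas _) hDdisj (hIntNorm u).integrableOn
  have hsum_r : ∀ u : W, Summable (fun k => ∫ t in B (e k), ‖(Ψ u : ℝ → Y) t‖ ∂μ) :=
    fun u => (hHasSum u).summable
  have hsumψ : ∀ u : W, Summable (fun k => ψ k u) := by
    intro u
    apply Summable.of_norm_bounded (hsum_r u)
    intro k
    rw [Real.norm_eq_abs, hψapp]
    exact hpair_bound k u _
  have hsumψabs : ∀ u : W, Summable (fun k => |ψ k u|) := by
    intro u
    apply Summable.of_nonneg_of_le (fun k => abs_nonneg _) ?_ (hsum_r u)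
    intro k
    rw [hψapp]
    exact hpair_bound k u _
  have htsum_r : ∀ u : W, ∑' k, ∫ t in B (e k), ‖(Ψ u : ℝ → Y) t‖ ∂μ ≤ ‖Ψ‖ * ‖u‖ := by
    intro u
    rw [(hHasSum u).tsum_eq]
    refine (setIntegral_le_integral (hIntNorm u)
      (Filter.Eventually.of_forall fun t => norm_nonneg _)).trans (hL1 u)
  -- the functional φ
  set φl : W →ₗ[ℝ] ℝ :=
    { toFun := fun u => ∑' k, ψ k u,
      map_add' := by
        intro u u'
        rw [← Summable.tsum_add (hsumψ u) (hsumψ u')]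
        exact tsum_congr fun k => by rw [map_add]
      map_smul' := by
        intro c u
        simp only [RingHom.id_apply, smul_eq_mul]
        rw [← tsum_mul_left]
        exact tsum_congr fun k => by rw [_root_.map_smul, smul_eq_mul] } with hφldef
  have hφlbound : ∀ u : W, ‖φl u‖ ≤ ‖Ψ‖ * ‖u‖ := by
    intro u
    refine (norm_tsum_le_tsum_norm ((hsumψabs u).congr (fun k => (Real.norm_eq_abs _).symm))).trans ?_
    refine le_trans ?_ (htsum_r u)
    apply Summable.tsum_le_tsum ?_ ((hsumψabs u).congr (fun k => (Real.norm_eq_abs _).symm)) (hsum_r u)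
    intro k
    rw [Real.norm_eq_abs, hψapp]
    exact hpair_bound k u _
  set φ : W →L[ℝ] ℝ := LinearMap.mkContinuous φl ‖Ψ‖ hφlbound with hφdef
  have hφapp : ∀ u : W, φ u = ∑' k, ψ k u := fun u => rfl
  -- lower bound for φ on the selected vectors
  have hφlow : ∀ k : ℕ, ε - 3*δ ≤ φ (v (a (e k))) := by
    intro k
    have hdiag : ε - 2*δ ≤ ψ k (v (a (e k))) := by
      have h1 := hg3 k
      have h2 := hBdiag (e k)
      rw [hψapp]
      show ε - 2*δ ≤ ∫ t in B (e k), g k t (F (a (e k)) t) ∂μ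
      linarith
    have hoffsum : ∑' j, (if j = k then 0 else |ψ j (v (a (e k)))|) ≤ δ := by
      have hsummable : Summable (fun j => if j = k then 0 else |ψ j (v (a (e k)))|) := by
        apply Summable.of_nonneg_of_le ?_ ?_ (hsumψabs (v (a (e k))))
        · intro j; by_cases h : j = k <;> simp [h, abs_nonneg]
        · intro j; by_cases h : j = k <;> simp [h, abs_nonneg]
      apply Summable.tsum_le_of_sum_le hsummable
      intro G
      have h1 : ∑ j ∈ G, (if j = k then 0 else |ψ j (v (a (e k)))|)
          = ∑ j ∈ G.erase k, |ψ j (v (a (e k)))| := by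
        rw [← Finset.sum_erase (a := k) G
          (f := fun j => if j = k then 0 else |ψ j (v (a (e k)))|) (by simp)]
        apply Finset.sum_congr rfl
        intro j hj
        rw [if_neg (Finset.ne_of_mem_erase hj)]
      rw [h1]
      refine le_trans ?_ (hRos k (G.erase k) (Finset.notMem_erase k G))
      apply Finset.sum_le_sum
      intro j hj
      rw [hψapp]
      exact hpair_bound j _ _
    have hsplit : φ (v (a (e k))) = ψ k (v (a (e k)))
        + ∑' j, (if j = k then 0 else ψ j (v (a (e k)))) := by
      rw [hφapp]
      exact Summable.tsum_eq_add_tsum_ite (hsumψ _) k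
    have hs2 : Summable (fun j => if j = k then 0 else ψ j (v (a (e k)))) := by
      apply Summable.of_norm_bounded (hsumψabs (v (a (e k))))
      intro j
      rw [Real.norm_eq_abs]
      by_cases h : j = k <;> simp [h, abs_nonneg, le_refl]
    have hoff2 : |∑' j, (if j = k then 0 else ψ j (v (a (e k))))| ≤ δ := by
      rw [← Real.norm_eq_abs]
      refine (norm_tsum_le_tsum_norm ?_).trans ?_
      · apply Summable.of_nonneg_of_le (fun j => norm_nonneg _) ?_
          (hsumψabs (v (a (e k))))
        intro j
        rw [Real.norm_eq_abs]
        by_cases h : j = k <;> simp [h, abs_nonneg, le_refl]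
      · refine le_trans (le_of_eq (tsum_congr fun j => ?_)) hoffsum
        rw [Real.norm_eq_abs]
        by_cases h : j = k <;> simp [h]
    linarith [abs_le.mp hoff2]
  -- weak-* compactness endgame
  set ι0 : W →L[ℝ] StrongDual ℝ (StrongDual ℝ W) :=
    NormedSpace.inclusionInDoubleDual ℝ W with hι0
  set x : ℕ → WeakDual ℝ (StrongDual ℝ W) :=
    fun k => StrongDual.toWeakDual (ι0 (v (a (e k)))) with hxdef
  have hxball : ∀ k, x k ∈ (WeakDual.toStrongDual ⁻¹' Metric.closedBall 0 1 :
      Set (WeakDual ℝ (StrongDual ℝ W))) := by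
    intro k
    simp only [Set.mem_preimage, Metric.mem_closedBall, dist_zero_right]
    show dist (ι0 (v (a (e k)))) 0 ≤ 1
    refine (dist_zero_right (ι0 (v (a (e k))))).le.trans ?_
    show ‖ι0 (v (a (e k)))‖ ≤ 1
    exact (NormedSpace.double_dual_bound ℝ W _).trans (hq2 _)
  have hle : Filter.map x Filter.atTop ≤
      Filter.principal (WeakDual.toStrongDual ⁻¹' Metric.closedBall 0 1) := by
    rw [Filter.le_principal_iff, Filter.mem_map]
    exact Filter.Eventually.of_forall hxball
  obtain ⟨ξ, hξmem, hξcl⟩ :=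
    (WeakDual.isCompact_closedBall (𝕜 := ℝ) (E := StrongDual ℝ W) 0 1).exists_clusterPt hle
  obtain ⟨z, hz⟩ := hrefl (WeakDual.toStrongDual ξ)
  have heval : ∀ ρ : StrongDual ℝ W, ξ ρ = ρ z := by
    intro ρ
    have h1 : ι0 z ρ = ρ z := NormedSpace.dual_def ℝ W z ρ
    rw [← h1, hz]
    rfl
  have hxeval : ∀ (k : ℕ) (ρ : StrongDual ℝ W), (x k) ρ = ρ (v (a (e k))) :=
    fun k ρ => rfl
  have hcl : ∀ H : WeakDual ℝ (StrongDual ℝ W) → ℝ, Continuous H →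
      ClusterPt (H ξ) (Filter.map (fun k => H (x k)) Filter.atTop) := by
    intro H hH
    have h1 := hξcl.map hH.continuousAt Filter.tendsto_map
    rwa [Filter.map_map] at h1
  have hzlow : ε - 3*δ ≤ φ z := by
    have h1 := hcl (fun ξ' => ξ' φ) (WeakDual.eval_continuous φ)
    have h2 : ∀ᶠ k in atTop, ε - 3*δ ≤ (fun k => (x k) φ) k :=
      Filter.Eventually.of_forall (fun k => hφlow k)
    have h3 := cluster_ge_of_eventually_ge h1 h2
    have h3' : ε - 3*δ ≤ ξ φ := h3
    rwa [heval φ] at h3'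
  have hzup : ∀ J : ℕ, ∑ j ∈ Finset.range J, |ψ j z| ≤ δ := by
    intro J
    have hHc : Continuous (fun ξ' : WeakDual ℝ (StrongDual ℝ W) =>
        ∑ j ∈ Finset.range J, |ξ' (ψ j)|) := by
      apply continuous_finset_sum
      intro j _
      exact (WeakDual.eval_continuous (ψ j)).abs
    have h1 := hcl _ hHc
    have h2 : ∀ᶠ k in atTop,
        (fun k => ∑ j ∈ Finset.range J, |(x k) (ψ j)|) k ≤ δ := by
      rw [eventually_atTop]
      refine ⟨J, fun k hk => ?_⟩
      have h3 : ∀ j ∈ Finset.range J, |(x k) (ψ j)| ≤ ∫ t in B (e j), ‖F (a (e k)) t‖ ∂μ := by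
        intro j hj
        rw [hxeval, hψapp]
        exact hpair_bound j _ _
      refine (Finset.sum_le_sum h3).trans ?_
      apply hRos k (Finset.range J)
      simp only [Finset.mem_range]
      omega
    have h4 := cluster_le_of_eventually_le h1 h2
    have h4' : ∑ j ∈ Finset.range J, |ξ (ψ j)| ≤ δ := h4
    have h5 : ∑ j ∈ Finset.range J, |ξ (ψ j)| = ∑ j ∈ Finset.range J, |ψ j z| :=
      Finset.sum_congr rfl fun j _ => by rw [heval]
    rwa [h5] at h4'
  have hfin : |φ z| ≤ δ := by
    rw [hφapp, ← Real.norm_eq_abs]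
    refine (norm_tsum_le_tsum_norm ((hsumψabs z).congr fun k =>
      (Real.norm_eq_abs _).symm)).trans ?_
    apply Summable.tsum_le_of_sum_le ((hsumψabs z).congr fun k => (Real.norm_eq_abs _).symm)
    intro G
    obtain ⟨n, hn⟩ := G.exists_nat_subset_range
    refine le_trans (Finset.sum_le_sum_of_subset_of_nonneg hn
      (fun j _ _ => norm_nonneg _)) ?_
    refine le_trans (le_of_eq (Finset.sum_congr rfl fun j _ => Real.norm_eq_abs _)) (hzup n)
  have hcontr := abs_le.mp hfin
  linarith
end

section
/- Let Y be a Banach space and M a subset of L¹([0,1];Y). If M is relatively weakly compact in L¹([0,1];Y), then M is uniformly integrable. -/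
open MeasureTheory Filter Topology
open scoped ENNReal NNReal

set_option linter.unusedSectionVars false
set_option maxHeartbeats 2000000

section Aux

variable {α : Type*} [MeasurableSpace α] {μ : Measure α} [IsFiniteMeasure μ]
variable {Y : Type*} [NormedAddCommGroup Y] [NormedSpace ℝ Y] [CompleteSpace Y]

noncomputable def setIntCLM (S : Set α) : Lp Y 1 μ →L[ℝ] Y :=
  LinearMap.mkContinuous
    { toFun := fun f => ∫ x in S, f x ∂μ
      map_add' := by
        intro f g
        rw [← integral_add ((L1.integrable_coeFn f).restrict) ((L1.integrable_coeFn g).restrict)]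
        exact integral_congr_ae (ae_restrict_of_ae (Lp.coeFn_add f g))
      map_smul' := by
        intro c f
        rw [RingHom.id_apply, ← integral_smul]
        exact integral_congr_ae (ae_restrict_of_ae (Lp.coeFn_smul c f)) }
    1 (by
      intro f
      simp only [LinearMap.coe_mk, AddHom.coe_mk, one_mul]
      calc ‖∫ x in S, f x ∂μ‖ ≤ ∫ x in S, ‖f x‖ ∂μ := norm_integral_le_integral_norm _
        _ ≤ ∫ x, ‖f x‖ ∂μ := setIntegral_le_integral (L1.integrable_coeFn f).norm
            (Eventually.of_forall fun x => norm_nonneg _)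
        _ = ‖f‖ := (L1.norm_eq_integral_norm f).symm)

lemma setIntCLM_apply (S : Set α) (f : Lp Y 1 μ) : setIntCLM S f = ∫ x in S, f x ∂μ := rfl

lemma exists_norming_dual (y : Y) : ∃ T : Y →L[ℝ] ℝ, ‖T‖ ≤ 1 ∧ T y = ‖y‖ := by
  by_cases h : y = 0
  · exact ⟨0, by simp, by simp [h]⟩
  · obtain ⟨T, hT1, hT2⟩ := exists_dual_vector ℝ y (norm_ne_zero_iff.mpr h)
    exact ⟨T, le_of_eq hT1, by simpa using hT2⟩

/-- Key norming functional: for any `g ∈ L¹` and measurable `B`, there is a functional `φ`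
with `|φ f| ≤ ∫_B ‖f‖` for all `f`, and `φ g ≥ ∫_B ‖g‖ - δ`. -/
lemma exists_norming_functional (B : Set α) (hB : MeasurableSet B) (g : Lp Y 1 μ)
    {δ : ℝ} (hδ : 0 < δ) :
    ∃ φ : Lp Y 1 μ →L[ℝ] ℝ, (∀ f : Lp Y 1 μ, |φ f| ≤ ∫ x in B, ‖f x‖ ∂μ) ∧
      (∫ x in B, ‖g x‖ ∂μ) - δ ≤ φ g := by
  classical
  -- simple function approximation
  obtain ⟨s, hs, hsmem⟩ := (Lp.memLp g).exists_simpleFunc_eLpNorm_sub_lt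
    (by norm_num : (1:ℝ≥0∞) ≠ ∞)
    (ε := ENNReal.ofReal (δ/2)) (ne_of_gt (ENNReal.ofReal_pos.mpr (by linarith)))
  have hg_int : Integrable (⇑g) μ := L1.integrable_coeFn g
  have hs_int : Integrable (⇑s) μ := memLp_one_iff_integrable.mp hsmem
  have hgs_int : Integrable (fun x => g x - s x) μ := hg_int.sub hs_int
  have hgs_small : ∫ x, ‖g x - s x‖ ∂μ ≤ δ/2 := by
    have h1 : ∫ x, ‖g x - s x‖ ∂μ = (eLpNorm (⇑g - ⇑s) 1 μ).toReal := by
      rw [integral_norm_eq_lintegral_enorm hgs_int.1, eLpNorm_one_eq_lintegral_enorm]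
      rfl
    rw [h1]
    have := ENNReal.toReal_mono (by simp) hs.le
    simpa [ENNReal.toReal_ofReal (by linarith : (0:ℝ) ≤ δ/2)] using this
  -- norming functionals
  choose T hT1 hT2 using fun y : Y => exists_norming_dual y
  set S : Y → Set α := fun y => B ∩ s ⁻¹' {y} with hS
  have hSmeas : ∀ y, MeasurableSet (S y) := fun y => hB.inter (s.measurableSet_fiber y)
  have hSdisj : (↑s.range : Set Y).Pairwise (Function.onFun Disjoint S) := by
    intro y _ z _ hyz
    refine Set.disjoint_left.mpr fun x hx hx' => hyz ?_
    rw [← hx.2, ← hx'.2]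
  have hSunion : ⋃ y ∈ s.range, S y = B := by
    apply Set.Subset.antisymm
    · exact Set.iUnion₂_subset fun y _ => Set.inter_subset_left
    · intro x hx
      exact Set.mem_biUnion (s.mem_range_self x) ⟨hx, rfl⟩
  -- finite partition additivity of set integrals of norm-type functions
  have hsplit : ∀ (h : α → ℝ), Integrable h μ →
      ∑ y ∈ s.range, ∫ x in S y, h x ∂μ = ∫ x in B, h x ∂μ := by
    intro h hh
    rw [← hSunion, integral_biUnion_finset s.range (fun y _ => hSmeas y)
      hSdisj (fun y _ => hh.integrableOn)]
  set φ : Lp Y 1 μ →L[ℝ] ℝ := ∑ y ∈ s.range, (T y).comp (setIntCLM (S y)) with hφ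
  have hφapp : ∀ f : Lp Y 1 μ, φ f = ∑ y ∈ s.range, T y (∫ x in S y, f x ∂μ) := by
    intro f
    rw [hφ, ContinuousLinearMap.sum_apply]
    rfl
  have hTbound : ∀ (y : Y) (v : Y), |T y v| ≤ ‖v‖ := by
    intro y v
    calc |T y v| = ‖T y v‖ := (Real.norm_eq_abs _).symm
      _ ≤ ‖T y‖ * ‖v‖ := (T y).le_opNorm v
      _ ≤ 1 * ‖v‖ := by gcongr; exact hT1 y
      _ = ‖v‖ := one_mul _
  refine ⟨φ, ?_, ?_⟩
  · intro f
    have hf_int : Integrable (⇑f) μ := L1.integrable_coeFn f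
    calc |φ f| ≤ ∑ y ∈ s.range, |T y (∫ x in S y, f x ∂μ)| := by
          rw [hφapp f]; exact Finset.abs_sum_le_sum_abs _ _
      _ ≤ ∑ y ∈ s.range, ∫ x in S y, ‖f x‖ ∂μ := by
          refine Finset.sum_le_sum fun y _ => ?_
          exact (hTbound y _).trans (norm_integral_le_integral_norm _)
      _ = ∫ x in B, ‖f x‖ ∂μ := hsplit _ hf_int.norm
  · -- lower bound
    have key : ∀ y ∈ s.range, (∫ x in S y, ‖s x‖ ∂μ) - ∫ x in S y, ‖g x - s x‖ ∂μ
        ≤ T y (∫ x in S y, g x ∂μ) := by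
      intro y _
      have hconst : ∫ x in S y, (s : α → Y) x ∂μ = (μ (S y)).toReal • y := by
        rw [setIntegral_congr_fun (hSmeas y) (fun x hx => hx.2), setIntegral_const, measureReal_def]
      have hconstn : ∫ x in S y, ‖(s : α → Y) x‖ ∂μ = (μ (S y)).toReal * ‖y‖ := by
        rw [setIntegral_congr_fun (f := fun x => ‖s x‖) (g := fun _ => ‖y‖) (hSmeas y)
          (fun x hx => by show ‖s x‖ = ‖y‖; rw [show s x = y from hx.2]),
          setIntegral_const, smul_eq_mul, measureReal_def]
      have hdecomp : ∫ x in S y, g x ∂μ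
          = (∫ x in S y, (s : α → Y) x ∂μ) + ∫ x in S y, (g x - s x) ∂μ := by
        have h0 : ∫ x in S y, g x ∂μ = ∫ x in S y, (s x + (g x - s x)) ∂μ :=
          integral_congr_ae (Eventually.of_forall fun x => by ring_nf; abel)
        rw [h0, integral_add hs_int.integrableOn hgs_int.integrableOn]
      rw [hdecomp, map_add]
      have h1 : T y (∫ x in S y, (s : α → Y) x ∂μ) = (μ (S y)).toReal * ‖y‖ := by
        rw [hconst, _root_.map_smul, hT2 y, smul_eq_mul]
      rw [h1, ← hconstn]
      have h2 : |T y (∫ x in S y, (g x - s x) ∂μ)| ≤ ∫ x in S y, ‖g x - s x‖ ∂μ :=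
        (hTbound y _).trans (norm_integral_le_integral_norm _)
      have := abs_le.mp h2
      linarith [this.1]
    have hsum : ∑ y ∈ s.range, ((∫ x in S y, ‖s x‖ ∂μ) - ∫ x in S y, ‖g x - s x‖ ∂μ) ≤ φ g := by
      rw [hφapp g]
      exact Finset.sum_le_sum key
    rw [Finset.sum_sub_distrib, hsplit _ hs_int.norm, hsplit _ hgs_int.norm] at hsum
    have htri : ∫ x in B, ‖g x‖ ∂μ ≤ (∫ x in B, ‖s x‖ ∂μ) + ∫ x in B, ‖g x - s x‖ ∂μ := by
      rw [← integral_add hs_int.norm.integrableOn hgs_int.norm.integrableOn]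
      refine setIntegral_mono_on hg_int.norm.integrableOn
        (hs_int.norm.integrableOn.add hgs_int.norm.integrableOn) hB fun x _ => ?_
      calc ‖g x‖ = ‖s x + (g x - s x)‖ := by congr 1; abel
        _ ≤ ‖s x‖ + ‖g x - s x‖ := norm_add_le _ _
    have hB2 : ∫ x in B, ‖g x - s x‖ ∂μ ≤ δ/2 :=
      le_trans (setIntegral_le_integral hgs_int.norm
        (Eventually.of_forall fun x => norm_nonneg _)) hgs_small
    linarith

/-- Countable subadditivity for set integrals of norms. -/
lemma setIntegral_norm_iUnion_le_tsum {g : α → Y} (hg : Integrable g μ)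
    (S : ℕ → Set α) (b : ℕ → ℝ) (hb0 : ∀ i, 0 ≤ b i)
    (hb : ∀ i, ∫ t in S i, ‖g t‖ ∂μ ≤ b i) (hbs : Summable b) :
    ∫ t in ⋃ i, S i, ‖g t‖ ∂μ ≤ ∑' i, b i := by
  set ν : Set α → ℝ≥0∞ := fun s => ∫⁻ t in s, ‖g t‖₊ ∂μ with hν
  have hfin : ∀ s, ν s < ∞ := by
    intro s
    refine lt_of_le_of_lt (lintegral_mono_set (Set.subset_univ s)) ?_
    rw [Measure.restrict_univ]; exact hg.2
  have hval : ∀ s : Set α, ∫ t in s, ‖g t‖ ∂μ = (ν s).toReal := by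
    intro s
    exact integral_norm_eq_lintegral_enorm (hg.1.restrict)
  have hle : ν (⋃ i, S i) ≤ ∑' i, ENNReal.ofReal (b i) := by
    refine le_trans (lintegral_iUnion_le _ _) (ENNReal.tsum_le_tsum fun i => ?_)
    have h1 : (ν (S i)).toReal ≤ b i := by rw [← hval]; exact hb i
    calc ν (S i) = ENNReal.ofReal ((ν (S i)).toReal) := by
          rw [ENNReal.ofReal_toReal (hfin (S i)).ne]
      _ ≤ ENNReal.ofReal (b i) := ENNReal.ofReal_le_ofReal h1
  rw [hval]
  have h2 : ∑' i, ENNReal.ofReal (b i) = ENNReal.ofReal (∑' i, b i) :=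
    (ENNReal.ofReal_tsum_of_nonneg hb0 hbs).symm
  rw [h2] at hle
  calc (ν (⋃ i, S i)).toReal ≤ (ENNReal.ofReal (∑' i, b i)).toReal :=
        ENNReal.toReal_mono ENNReal.ofReal_ne_top hle
    _ = ∑' i, b i := ENNReal.toReal_ofReal (tsum_nonneg hb0)

end Aux

section Bounded

variable {X : Type*} [NormedAddCommGroup X] [NormedSpace ℝ X]

lemma weak_eval_continuous (φ : X →L[ℝ] ℝ) :
    Continuous fun w : WeakSpace ℝ X => φ ((toWeakSpace ℝ X).symm w) :=
  WeakBilin.eval_continuous (topDualPairing ℝ X).flip φ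

lemma bounded_of_weakly_compact (M : Set X)
    (hM : IsCompact (closure (toWeakSpace ℝ X '' M))) :
    ∃ C : ℝ, 0 ≤ C ∧ ∀ f ∈ M, ‖f‖ ≤ C := by
  have hpt : ∀ φ : X →L[ℝ] ℝ, ∃ C, ∀ f ∈ M, |φ f| ≤ C := by
    intro φ
    have hcont := weak_eval_continuous φ
    have hcomp : IsCompact ((fun w : WeakSpace ℝ X => φ ((toWeakSpace ℝ X).symm w)) ''
        closure (toWeakSpace ℝ X '' M)) := hM.image hcont
    obtain ⟨C, hC⟩ := isBounded_iff_forall_norm_le.mp hcomp.isBounded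
    refine ⟨C, fun f hf => ?_⟩
    have hmem : toWeakSpace ℝ X f ∈ closure (toWeakSpace ℝ X '' M) :=
      subset_closure (Set.mem_image_of_mem _ hf)
    have := hC _ (Set.mem_image_of_mem _ hmem)
    simpa [Real.norm_eq_abs] using this
  have hbs : ∃ C', ∀ i : M, ‖NormedSpace.inclusionInDoubleDual ℝ X i.val‖ ≤ C' := by
    apply banach_steinhaus
    intro φ
    obtain ⟨C, hC⟩ := hpt φ
    refine ⟨C, fun i => ?_⟩
    simpa [NormedSpace.dual_def, Real.norm_eq_abs] using hC i.val i.property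
  obtain ⟨C', hC'⟩ := hbs
  refine ⟨max C' 0, le_max_right _ _, fun f hf => ?_⟩
  have h1 : ‖NormedSpace.inclusionInDoubleDual ℝ X f‖ = ‖f‖ :=
    (NormedSpace.inclusionInDoubleDualLi ℝ).norm_map f
  have := hC' ⟨f, hf⟩
  rw [h1] at this
  exact this.trans (le_max_left _ _)

/-- Tails of an absolutely summable series tend to zero. -/
lemma tail_tendsto_zero (a : ℕ → ℝ) (ha : Summable fun j => |a j|) :
    Tendsto (fun P => ∑' j, |a (j + P)|) atTop (𝓝 0) := by
  have h1 := ha.hasSum.tendsto_sum_nat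
  have h2 : ∀ P, ∑' j, |a (j + P)| = (∑' j, |a j|) - ∑ j ∈ Finset.range P, |a j| := by
    intro P
    rw [← Summable.sum_add_tsum_nat_add P ha]
    ring
  simp_rw [h2]
  have h3 : Tendsto (fun P => (∑' j, |a j|) - ∑ j ∈ Finset.range P, |a j|) atTop
      (𝓝 ((∑' j, |a j|) - ∑' j, |a j|)) := tendsto_const_nhds.sub h1
  simpa using h3

/-- The gliding hump lemma: if `(φ j)` are functionals with `∑ j |φ j x| ≤ ‖x‖` and `M` is
relatively weakly compact, then `sup_{x ∈ M} |φ k x| → 0` as `k → ∞`. -/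
lemma glidingHump (M : Set X) (hM : IsCompact (closure (toWeakSpace ℝ X '' M)))
    (φ : ℕ → X →L[ℝ] ℝ)
    (hφ : ∀ (x : X) (n : ℕ), ∑ j ∈ Finset.range n, |φ j x| ≤ ‖x‖)
    (ε : ℝ) (hε : 0 < ε) :
    ∃ N, ∀ k ≥ N, ∀ x ∈ M, |φ k x| ≤ ε := by
  by_contra hcon
  push_neg at hcon
  obtain ⟨C, hC0, hC⟩ := bounded_of_weakly_compact M hM
  have hrow : ∀ x : X, Summable fun j => |φ j x| := fun x =>
    summable_of_sum_range_le (fun j => abs_nonneg _) (hφ x)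
  have hrow_tsum : ∀ x : X, ∑' j, |φ j x| ≤ ‖x‖ := fun x =>
    Real.tsum_le_of_sum_range_le (fun j => abs_nonneg _) (hφ x)
  have hone : ∀ (x : X) (j : ℕ), |φ j x| ≤ ‖x‖ := by
    intro x j
    refine le_trans ?_ (hφ x (j+1))
    exact Finset.single_le_sum (f := fun i => |φ i x|) (fun i _ => abs_nonneg _)
      (Finset.self_mem_range_succ j)
  choose k hk x0 hx0M hx0 using hcon
  -- a strictly increasing sequence of bad indices
  let N : ℕ → ℕ := fun r => Nat.rec 0 (fun _ Nr => k Nr + 1) r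
  have hN : ∀ r, N (r + 1) = k (N r) + 1 := fun r => rfl
  set κ : ℕ → ℕ := fun r => k (N r) with hκdef
  set z : ℕ → X := fun r => x0 (N r) with hzdef
  have hκmono : StrictMono κ := by
    apply strictMono_nat_of_lt_succ
    intro r
    have h1 : k (N (r + 1)) ≥ N (r + 1) := hk _
    rw [hN r] at h1
    exact lt_of_lt_of_le (Nat.lt_succ_self _) h1
  have hzM : ∀ r, z r ∈ M := fun r => hx0M _
  have hzε : ∀ r, ε < |φ (κ r) (z r)| := fun r => hx0 _
  -- extract a pointwise convergent subsequence of the rows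
  have hmem : ∀ r, (fun j => φ j (z r)) ∈ Set.univ.pi fun _ : ℕ => Set.Icc (-C) C := by
    intro r j _
    have h1 := (hone (z r) j).trans (hC _ (hzM r))
    have h2 := abs_le.mp h1
    exact ⟨h2.1, h2.2⟩
  obtain ⟨c, -, σ, hσ, hcσ⟩ :=
    (isCompact_univ_pi fun _ : ℕ => isCompact_Icc).tendsto_subseq hmem
  set z' : ℕ → X := fun r => z (σ r) with hz'def
  set κ' : ℕ → ℕ := fun r => κ (σ r) with hκ'def
  have hκ'mono : StrictMono κ' := hκmono.comp hσ
  have hc : ∀ j, Tendsto (fun r => φ j (z' r)) atTop (𝓝 (c j)) := by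
    intro j
    exact (tendsto_pi_nhds.mp hcσ) j
  have hz'M : ∀ r, z' r ∈ M := fun r => hzM _
  have hz'ε : ∀ r, ε < |φ (κ' r) (z' r)| := fun r => hzε _
  -- the limit row is absolutely summable
  have hcpartial : ∀ n, ∑ j ∈ Finset.range n, |c j| ≤ C := by
    intro n
    have h1 : Tendsto (fun r => ∑ j ∈ Finset.range n, |φ j (z' r)|) atTop
        (𝓝 (∑ j ∈ Finset.range n, |c j|)) := by
      apply tendsto_finset_sum
      intro j _
      exact (hc j).abs
    refine le_of_tendsto h1 (Eventually.of_forall fun r => ?_)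
    exact (hφ (z' r) n).trans (hC _ (hz'M r))
  have hcsum : Summable fun j => |c j| :=
    summable_of_sum_range_le (fun _ => abs_nonneg _) hcpartial
  set δ : ℝ := ε / 6 with hδdef
  have hδ : 0 < δ := by positivity
  obtain ⟨P0, hP0⟩ : ∃ P0, ∑' j, |c (j + P0)| ≤ δ :=
    ((tail_tendsto_zero c hcsum).eventually_lt_const hδ).exists.imp fun _ h => h.le
  choose T hT using fun m =>
    ((tail_tendsto_zero (fun j => φ j (z' m)) (hrow (z' m))).eventually_lt_const hδ).exists
  -- second extraction: gliding humps
  obtain ⟨f, hfQ, hfr⟩ := exists_seq_of_forall_finset_exists (fun m => P0 ≤ κ' m)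
    (fun m m' => m < m' ∧ T m ≤ κ' m' ∧ ∀ j ≤ κ' m, |φ j (z' m') - c j| ≤ δ * (1/2)^(m+1))
    (by
      intro s _
      have hev : ∀ᶠ m' in atTop, (P0 ≤ m') ∧ ∀ m ∈ s,
          (m < m' ∧ T m ≤ m' ∧ ∀ j ∈ Finset.range (κ' m + 1),
            |φ j (z' m') - c j| ≤ δ * (1/2)^(m+1)) := by
        refine (eventually_ge_atTop P0).and ?_
        rw [eventually_all_finset]
        intro m _
        refine (eventually_gt_atTop m).and ((eventually_ge_atTop (T m)).and ?_)
        rw [eventually_all_finset]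
        intro j _
        have h1 : ∀ᶠ m' in atTop, |φ j (z' m') - c j| < δ * (1/2)^(m+1) := by
          have hpos : (0:ℝ) < δ * (1/2)^(m+1) := by positivity
          have := Metric.tendsto_atTop.mp (hc j) _ hpos
          obtain ⟨Nn, hNn⟩ := this
          rw [eventually_atTop]
          exact ⟨Nn, fun b hb => by rw [← Real.dist_eq]; exact hNn b hb⟩
        exact h1.mono fun m' h => h.le
      obtain ⟨m', hm'⟩ := hev.exists
      refine ⟨m', le_trans hm'.1 (hκ'mono.le_apply), fun m hm => ?_⟩
      obtain ⟨h1, h2, h3⟩ := hm'.2 m hm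
      exact ⟨h1, le_trans h2 hκ'mono.le_apply, fun j hj => h3 j
        (Finset.mem_range.mpr (Nat.lt_succ_of_le hj))⟩)
  have hfmono : StrictMono f := fun m n h => (hfr m n h).1
  set l : ℕ → ℕ := fun t => κ' (f t) with hldef
  set y : ℕ → X := fun t => z' (f t) with hydef
  have hlmono : StrictMono l := hκ'mono.comp hfmono
  have hlinj : Function.Injective l := hlmono.injective
  have hlP : ∀ t, P0 ≤ l t := fun t => hfQ t
  have hyM : ∀ t, y t ∈ M := fun t => hz'M _
  have hyε : ∀ t, ε < |φ (l t) (y t)| := fun t => hz'ε _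
  -- signs
  set sg : ℕ → ℝ := fun t => if 0 ≤ φ (l t) (y t) then (1:ℝ) else -1 with hsgdef
  have hsgabs : ∀ t (v : ℝ), |sg t * v| = |v| := by
    intro t v
    rw [abs_mul]
    rcases le_or_gt 0 (φ (l t) (y t)) with h | h <;> simp [hsgdef, h, not_le.mpr]
  have hsgdiag : ∀ t, sg t * φ (l t) (y t) = |φ (l t) (y t)| := by
    intro t
    rcases le_or_gt 0 (φ (l t) (y t)) with h | h
    · rw [abs_of_nonneg h]; simp [hsgdef, h]
    · rw [abs_of_neg h]; simp [hsgdef, not_le.mpr h]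
  -- summability
  have hsum_l : ∀ xx : X, Summable fun t => |φ (l t) xx| := fun xx =>
    (hrow xx).comp_injective hlinj
  have hsum_sl : ∀ xx : X, Summable fun t => sg t * φ (l t) xx := by
    intro xx
    apply Summable.of_abs
    simp_rw [hsgabs]
    exact hsum_l xx
  have htsum_l_le : ∀ xx : X, ∑' t, |φ (l t) xx| ≤ ∑' j, |φ j xx| := fun xx =>
    Summable.tsum_le_tsum_of_inj l hlinj (fun _ _ => abs_nonneg _) (fun t => le_rfl)
      (hsum_l xx) (hrow xx)
  -- the hump functional
  set ψ : X →L[ℝ] ℝ := LinearMap.mkContinuous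
    { toFun := fun xx => ∑' t, sg t * φ (l t) xx
      map_add' := by
        intro xx yy
        simp_rw [map_add, mul_add]
        exact Summable.tsum_add (hsum_sl xx) (hsum_sl yy)
      map_smul' := by
        intro r xx
        simp_rw [_root_.map_smul, smul_eq_mul, RingHom.id_apply, mul_left_comm (sg _) r]
        exact tsum_mul_left }
    1 (by
      intro xx
      simp only [LinearMap.coe_mk, AddHom.coe_mk, one_mul, Real.norm_eq_abs]
      calc |∑' t, sg t * φ (l t) xx| ≤ ∑' t, |sg t * φ (l t) xx| := by
            have hs1 : (fun t => ‖sg t * φ (l t) xx‖) = fun t => |φ (l t) xx| := by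
              funext t; rw [Real.norm_eq_abs, hsgabs]
            have h0 := norm_tsum_le_tsum_norm
              (f := fun t => sg t * φ (l t) xx) (by rw [hs1]; exact hsum_l xx)
            simp only [Real.norm_eq_abs] at h0
            exact h0
        _ = ∑' t, |φ (l t) xx| := by simp_rw [hsgabs]
        _ ≤ ∑' j, |φ j xx| := htsum_l_le xx
        _ ≤ ‖xx‖ := hrow_tsum xx) with hψdef
  have hψapp : ∀ xx : X, ψ xx = ∑' t, sg t * φ (l t) xx := fun xx => rfl
  -- weak cluster point
  set seq : ℕ → WeakSpace ℝ X := fun t => toWeakSpace ℝ X (y t) with hseqdef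
  have hseqmem : ∀ t, seq t ∈ closure (toWeakSpace ℝ X '' M) := fun t =>
    subset_closure (Set.mem_image_of_mem _ (hyM t))
  obtain ⟨w, hwmem, hw⟩ := hM.exists_mapClusterPt (f := atTop) (u := seq)
    (le_principal_iff.mpr (Filter.mem_map.mpr (Eventually.of_forall hseqmem)))
  set wx : X := (toWeakSpace ℝ X).symm w with hwxdef
  have hcluster : ∀ Φ : X →L[ℝ] ℝ, MapClusterPt (Φ wx) atTop (fun t => Φ (y t)) := by
    intro Φ
    have hcont := weak_eval_continuous Φ
    have h1 := MapClusterPt.continuousAt_comp hcont.continuousAt hw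
    have h2 : ((fun ww : WeakSpace ℝ X => Φ ((toWeakSpace ℝ X).symm ww)) ∘ seq)
        = fun t => Φ (y t) := by
      funext t
      simp [hseqdef]
    rwa [h2] at h1
  -- functional values at the cluster point
  have hwc : ∀ j, φ j wx = c j := by
    intro j
    have h1 := hcluster (φ j)
    have h2 : Tendsto (fun t => φ j (y t)) atTop (𝓝 (c j)) :=
      (hc j).comp hfmono.tendsto_atTop
    have h1' : Filter.NeBot (𝓝 (φ j wx) ⊓ Filter.map (fun t => φ j (y t)) atTop) := h1
    exact eq_of_nhds_neBot (h1'.mono (inf_le_inf_left _ h2))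
  -- ψ at the cluster point is small
  have hclδ : ∑' t, |c (l t)| ≤ δ := by
    refine le_trans (Summable.tsum_le_tsum_of_inj (fun t => l t - P0)
      (fun a b hab => ?_) (fun _ _ => abs_nonneg _) (fun t => ?_)
      (hcsum.comp_injective hlinj) ((summable_nat_add_iff P0).mpr hcsum)) hP0
    · apply hlinj
      have hab' : l a - P0 = l b - P0 := hab
      have ha := hlP a
      have hb := hlP b
      omega
    · rw [Nat.sub_add_cancel (hlP t)]
  have hψw : |ψ wx| ≤ δ := by
    rw [hψapp]
    simp_rw [hwc]
    calc |∑' t, sg t * c (l t)| ≤ ∑' t, |sg t * c (l t)| := by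
          have hs1 : (fun t => ‖sg t * c (l t)‖) = fun t => |c (l t)| := by
            funext t; rw [Real.norm_eq_abs, hsgabs]
          have h0 := norm_tsum_le_tsum_norm
            (f := fun t => sg t * c (l t))
            (by rw [hs1]; exact hcsum.comp_injective hlinj)
          simp only [Real.norm_eq_abs] at h0
          exact h0
      _ = ∑' t, |c (l t)| := by simp_rw [hsgabs]
      _ ≤ δ := hclδ
  -- lower bound for ψ on the humps
  have hψy : ∀ t, ε - 3*δ ≤ ψ (y t) := by
    intro t
    classical
    set a : ℕ → ℝ := fun t' => sg t' * φ (l t') (y t) with hadef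
    have ha : Summable a := hsum_sl (y t)
    have hsplit := Summable.tsum_eq_add_tsum_ite ha t
    set g : ℕ → ℝ := fun t' => if t' = t then 0 else |φ (l t') (y t)| with hgdef
    have hg_nonneg : ∀ t', 0 ≤ g t' := by
      intro t'
      by_cases h : t' = t <;> simp [hgdef, h, abs_nonneg]
    have hg_le : ∀ t', g t' ≤ |φ (l t') (y t)| := by
      intro t'
      by_cases h : t' = t <;> simp [hgdef, h, abs_nonneg]
    have hg_sum : Summable g := Summable.of_nonneg_of_le hg_nonneg hg_le (hsum_l (y t))
    have hrem : |∑' t', if t' = t then 0 else a t'| ≤ ∑' t', g t' := by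
      have h1 : ∀ t', |if t' = t then 0 else a t'| = g t' := by
        intro t'
        by_cases h : t' = t <;> simp [hgdef, hadef, h, hsgabs]
      calc |∑' t', if t' = t then 0 else a t'|
          ≤ ∑' t', |if t' = t then 0 else a t'| := by
            have h0 := norm_tsum_le_tsum_norm
              (f := fun t' => if t' = t then 0 else a t')
              (by simp_rw [Real.norm_eq_abs, h1]; exact hg_sum)
            simp only [Real.norm_eq_abs] at h0
            exact h0
        _ = ∑' t', g t' := by simp_rw [h1]
    have hgsplit := Summable.sum_add_tsum_nat_add (t+1) hg_sum
    -- past bound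
    have hpast : ∑ t' ∈ Finset.range (t+1), g t' ≤ 2*δ := by
      rw [Finset.sum_range_succ]
      have hgt : g t = 0 := by simp [hgdef]
      rw [hgt, add_zero]
      have hterm : ∀ t' ∈ Finset.range t, g t' ≤ |c (l t')| + δ * (1/2)^(t'+1) := by
        intro t' ht'
        rw [Finset.mem_range] at ht'
        have hne : t' ≠ t := Nat.ne_of_lt ht'
        have h1 : g t' = |φ (l t') (y t)| := by simp [hgdef, hne]
        have h2 := (hfr t' t ht').2.2 (l t') le_rfl
        have h3 : |φ (l t') (y t)| - |c (l t')| ≤ |φ (l t') (y t) - c (l t')| :=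
          abs_sub_abs_le_abs_sub _ _
        have h4 : δ * (1/2:ℝ)^(f t' + 1) ≤ δ * (1/2)^(t'+1) := by
          apply mul_le_mul_of_nonneg_left _ hδ.le
          apply pow_le_pow_of_le_one (by norm_num) (by norm_num)
          exact Nat.succ_le_succ hfmono.le_apply
        rw [h1]
        linarith
      calc ∑ t' ∈ Finset.range t, g t'
          ≤ ∑ t' ∈ Finset.range t, (|c (l t')| + δ * (1/2)^(t'+1)) :=
            Finset.sum_le_sum hterm
        _ = (∑ t' ∈ Finset.range t, |c (l t')|) + ∑ t' ∈ Finset.range t, δ * (1/2)^(t'+1) :=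
            Finset.sum_add_distrib
        _ ≤ δ + δ := by
            gcongr
            · calc ∑ t' ∈ Finset.range t, |c (l t')|
                  ≤ ∑' t', |c (l t')| := Summable.sum_le_tsum _ (fun _ _ => abs_nonneg _)
                    (hcsum.comp_injective hlinj)
                _ ≤ δ := hclδ
            · calc ∑ t' ∈ Finset.range t, δ * (1/2:ℝ)^(t'+1)
                  = δ * ∑ t' ∈ Finset.range t, (1/2:ℝ)^(t'+1) := by
                    rw [Finset.mul_sum]
                _ ≤ δ * 1 := by
                    apply mul_le_mul_of_nonneg_left _ hδ.le
                    have h5 : ∀ t' ∈ Finset.range t, (1/2:ℝ)^(t'+1) = (1/2) * (1/2)^t' := by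
                      intro t' _
                      rw [pow_succ]
                      ring
                    rw [Finset.sum_congr rfl h5, ← Finset.mul_sum]
                    have := sum_geometric_two_le t
                    linarith
                _ = δ := mul_one δ
        _ = 2*δ := by ring
    -- future bound
    have hfut : ∑' i, g (i + (t+1)) ≤ δ := by
      have hsub : ∀ i, T (f t) ≤ l (i + (t+1)) := by
        intro i
        have h1 := (hfr t (i + (t+1)) (by omega)).2.1
        exact h1
      refine le_trans (Summable.tsum_le_tsum_of_inj (fun i => l (i + (t+1)) - T (f t))
        (fun i1 i2 h12 => ?_) (fun _ _ => abs_nonneg _) (fun i => ?_)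
        ((summable_nat_add_iff (t+1)).mpr hg_sum)
        ((summable_nat_add_iff (T (f t))).mpr (hrow (y t)))) (hT (f t)).le
      · have hab' : l (i1 + (t+1)) - T (f t) = l (i2 + (t+1)) - T (f t) := h12
        have h1 := hsub i1
        have h2 := hsub i2
        have h3 : l (i1 + (t+1)) = l (i2 + (t+1)) := by omega
        have h4 := hlinj h3
        omega
      · have hne : i + (t+1) ≠ t := by omega
        have h1 : g (i + (t+1)) = |φ (l (i + (t+1))) (y t)| := by simp [hgdef, hne]
        rw [h1, Nat.sub_add_cancel (hsub i)]
    -- assemble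
    have habs := abs_le.mp hrem
    have hεt := hyε t
    have hdiag := hsgdiag t
    rw [hψapp]
    rw [hsplit]
    have h6 : a t = |φ (l t) (y t)| := hdiag
    have h7 : ∑ i ∈ Finset.range (t+1), g i + ∑' i, g (i + (t+1)) = ∑' i, g i := hgsplit
    linarith [habs.1]
  -- contradiction via the cluster point
  have hclψ := hcluster ψ
  have hmem2 : Set.Ioo (ψ wx - δ) (ψ wx + δ) ∈ 𝓝 (ψ wx) :=
    Ioo_mem_nhds (by linarith) (by linarith)
  obtain ⟨t, ht⟩ := (mapClusterPt_iff_frequently.mp hclψ _ hmem2).exists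
  have h8 := hψy t
  have h9 := abs_le.mp hψw
  have h10 := ht.2
  rw [hδdef] at *
  linarith [ht.1]

end Bounded


/-- A relatively weakly compact subset `M` of `L¹([0,1];Y)` is
uniformly integrable. -/
theorem stmt_1
    (Y : Type*) [NormedAddCommGroup Y] [NormedSpace ℝ Y] [CompleteSpace Y]
    (μ : Measure ℝ) (hμ : μ = volume.restrict (Set.Icc (0:ℝ) 1))
    (M : Set (Lp Y 1 μ))
    (hM : IsCompact (closure (toWeakSpace ℝ (Lp Y 1 μ) '' M))) :
    ∀ E : ℕ → Set ℝ, (∀ n, MeasurableSet (E n)) →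
      Tendsto (fun n => μ (E n)) atTop (𝓝 0) →
      ∀ ε > (0:ℝ), ∃ N : ℕ, ∀ n ≥ N, ∀ f ∈ M,
        ∫ t in E n, ‖(f : ℝ → Y) t‖ ∂μ ≤ ε := by
  haveI : IsFiniteMeasure μ := by
    subst hμ
    constructor
    rw [Measure.restrict_apply_univ]
    simp [Real.volume_Icc]
  clear hμ
  intro E hEmeas hEtend ε hε
  by_contra hcon
  push_neg at hcon
  -- hcon : ∀ N, ∃ n ≥ N, ∃ f ∈ M, ε < ∫ t in E n, ‖f t‖ ∂μ
  set δ : ℝ := ε / 8 with hδdef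
  have hδ : 0 < δ := by positivity
  classical
  -- recursive selection of bad indices and functions
  obtain ⟨v, hvP, hvr⟩ := exists_seq_of_forall_finset_exists
    (fun a : ℕ × ℕ × Lp Y 1 μ => a.2.2 ∈ M ∧ ε < ∫ t in E a.2.1, ‖a.2.2 t‖ ∂μ)
    (fun a b => a.1 < b.1 ∧ a.2.1 < b.2.1 ∧
      ∫ t in E b.2.1, ‖a.2.2 t‖ ∂μ ≤ δ * (1/2)^(b.1))
    (by
      intro s _
      set K := (s.sup fun a => a.1) + 1 with hK
      have hev : ∀ᶠ n in atTop, ∀ a ∈ s, ∫ t in E n, ‖(a.2.2 : ℝ → Y) t‖ ∂μ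
          ≤ δ * (1/2)^K := by
        rw [eventually_all_finset]
        intro a _
        have hint : Integrable (fun t => ‖(a.2.2 : ℝ → Y) t‖) μ :=
          (L1.integrable_coeFn a.2.2).norm
        have htend : Tendsto (fun n => ∫ t in E n, ‖(a.2.2 : ℝ → Y) t‖ ∂μ) atTop (𝓝 0) :=
          hint.tendsto_setIntegral_nhds_zero hEtend
        exact (htend.eventually_lt_const (by positivity : (0:ℝ) < δ * (1/2)^K)).mono
          fun n h => h.le
      obtain ⟨N₀, hN₀⟩ := eventually_atTop.mp hev
      obtain ⟨n', hn', f', hf'M, hf'⟩ := hcon (max N₀ ((s.sup fun a => a.2.1) + 1))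
      refine ⟨(K, n', f'), ⟨hf'M, hf'⟩, fun a ha => ⟨?_, ?_, ?_⟩⟩
      · exact lt_of_le_of_lt (Finset.le_sup (f := fun a => a.1) ha) (Nat.lt_succ_self _)
      · refine lt_of_lt_of_le (Nat.lt_succ_of_le (Finset.le_sup (f := fun a => a.2.1) ha)) ?_
        exact le_trans (le_max_right _ _) hn'
      · exact hN₀ n' (le_trans (le_max_left _ _) hn') a ha)
  set nn : ℕ → ℕ := fun j => (v j).2.1 with hnn
  set ff : ℕ → Lp Y 1 μ := fun j => (v j).2.2 with hff
  set kk : ℕ → ℕ := fun j => (v j).1 with hkk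
  have hkmono : StrictMono kk := fun i j hij => (hvr i j hij).1
  have hkj : ∀ j, j ≤ kk j := fun j => hkmono.le_apply
  have hfM : ∀ j, ff j ∈ M := fun j => (hvP j).1
  have hfε : ∀ j, ε < ∫ t in E (nn j), ‖(ff j : ℝ → Y) t‖ ∂μ := fun j => (hvP j).2
  have hsmall : ∀ i j, i < j → ∫ t in E (nn j), ‖(ff i : ℝ → Y) t‖ ∂μ ≤ δ * (1/2)^(kk j) :=
    fun i j hij => (hvr i j hij).2.2
  -- disjointification
  set A : ℕ → Set ℝ := fun j => E (nn j) with hA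
  have hAmeas : ∀ j, MeasurableSet (A j) := fun j => hEmeas _
  set U : ℕ → Set ℝ := fun j => ⋃ i, A (j + 1 + i) with hU
  have hUmeas : ∀ j, MeasurableSet (U j) := fun j => MeasurableSet.iUnion fun i => hAmeas _
  set B : ℕ → Set ℝ := fun j => A j \ U j with hB
  have hBmeas : ∀ j, MeasurableSet (B j) := fun j => (hAmeas j).diff (hUmeas j)
  have hBsub : ∀ j, B j ⊆ A j := fun j => Set.diff_subset
  have hBdisj : Pairwise (Function.onFun Disjoint B) := by
    intro i j hij
    rcases hij.lt_or_gt with h | h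
    · refine Set.disjoint_left.mpr fun x hx hx' => ?_
      exact hx.2 (Set.mem_iUnion.mpr ⟨j - i - 1, by
        have : i + 1 + (j - i - 1) = j := by omega
        rw [this]; exact hx'.1⟩)
    · refine Set.disjoint_right.mpr fun x hx hx' => ?_
      exact hx.2 (Set.mem_iUnion.mpr ⟨i - j - 1, by
        have : j + 1 + (i - j - 1) = i := by omega
        rw [this]; exact hx'.1⟩)
  -- lower bound for the mass of `ff j` on `B j`
  have hlow : ∀ j, ε - δ ≤ ∫ t in B j, ‖(ff j : ℝ → Y) t‖ ∂μ := by
    intro j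
    have hint : Integrable (fun t => ‖(ff j : ℝ → Y) t‖) μ := (L1.integrable_coeFn (ff j)).norm
    have hsplitAB : ∫ t in A j, ‖(ff j : ℝ → Y) t‖ ∂μ
        = (∫ t in B j, ‖(ff j : ℝ → Y) t‖ ∂μ) + ∫ t in A j \ B j, ‖(ff j : ℝ → Y) t‖ ∂μ := by
      rw [← setIntegral_union (Set.disjoint_sdiff_right.mono_right le_rfl)
        ((hAmeas j).diff (hBmeas j)) hint.integrableOn hint.integrableOn,
        Set.union_diff_cancel (hBsub j)]
    have hUbound : ∫ t in A j \ B j, ‖(ff j : ℝ → Y) t‖ ∂μ ≤ δ := by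
      have hsub : A j \ B j ⊆ U j := by
        intro x hx
        by_contra hxU
        exact hx.2 ⟨hx.1, hxU⟩
      have h1 : ∫ t in A j \ B j, ‖(ff j : ℝ → Y) t‖ ∂μ
          ≤ ∫ t in U j, ‖(ff j : ℝ → Y) t‖ ∂μ :=
        setIntegral_mono_set hint.integrableOn
          (Eventually.of_forall fun x => norm_nonneg _) (HasSubset.Subset.eventuallyLE hsub)
      refine h1.trans ?_
      have h2 : ∫ t in ⋃ i, A (j + 1 + i), ‖(ff j : ℝ → Y) t‖ ∂μ
          ≤ ∑' i, δ * (1/2)^(j + 1 + i) := by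
        refine setIntegral_norm_iUnion_le_tsum (L1.integrable_coeFn (ff j)) _ _
          (fun i => by positivity) (fun i => ?_) ?_
        · refine (hsmall j (j + 1 + i) (by omega)).trans ?_
          have hki := hkj (j + 1 + i)
          apply mul_le_mul_of_nonneg_left _ hδ.le
          exact pow_le_pow_of_le_one (by norm_num) (by norm_num) hki
        · apply Summable.mul_left
          exact summable_geometric_two.comp_injective (fun a b h => by omega)
      refine h2.trans ?_
      have h3 : ∑' i, δ * (1/2:ℝ)^(j + 1 + i) = δ * (1/2)^j := by
        have h4 : ∀ i, δ * (1/2:ℝ)^(j + 1 + i) = (δ * (1/2)^(j+1)) * (1/2)^i := by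
          intro i
          rw [pow_add]
          ring
        simp_rw [h4]
        rw [tsum_mul_left, tsum_geometric_two]
        rw [pow_succ]
        ring
      rw [h3]
      calc δ * (1/2:ℝ)^j ≤ δ * 1 := by
            apply mul_le_mul_of_nonneg_left _ hδ.le
            apply pow_le_one₀ <;> norm_num
        _ = δ := mul_one δ
    have := hfε j
    rw [hA] at hsplitAB
    linarith [hsplitAB, hUbound]
  -- norming functionals
  have hφex : ∀ j, ∃ φ : Lp Y 1 μ →L[ℝ] ℝ,
      (∀ f : Lp Y 1 μ, |φ f| ≤ ∫ x in B j, ‖f x‖ ∂μ) ∧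
      (∫ x in B j, ‖(ff j : ℝ → Y) x‖ ∂μ) - δ ≤ φ (ff j) :=
    fun j => exists_norming_functional (B j) (hBmeas j) (ff j) hδ
  choose φ hφ1 hφ2 using hφex
  have hφdiag : ∀ j, ε - 2*δ ≤ φ j (ff j) := by
    intro j
    have := hlow j
    have := hφ2 j
    linarith
  -- the functionals satisfy the summability hypothesis
  have hφsum : ∀ (h : Lp Y 1 μ) (n : ℕ), ∑ j ∈ Finset.range n, |φ j h| ≤ ‖h‖ := by
    intro h n
    have hint : Integrable (fun t => ‖(h : ℝ → Y) t‖) μ := (L1.integrable_coeFn h).norm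
    calc ∑ j ∈ Finset.range n, |φ j h|
        ≤ ∑ j ∈ Finset.range n, ∫ x in B j, ‖(h : ℝ → Y) x‖ ∂μ :=
          Finset.sum_le_sum fun j _ => hφ1 j h
      _ = ∫ x in ⋃ j ∈ Finset.range n, B j, ‖(h : ℝ → Y) x‖ ∂μ :=
          (integral_biUnion_finset (Finset.range n) (fun j _ => hBmeas j)
            (fun i _ j _ hij => hBdisj hij) (fun j _ => hint.integrableOn)).symm
      _ ≤ ∫ x, ‖(h : ℝ → Y) x‖ ∂μ :=
          setIntegral_le_integral hint (Eventually.of_forall fun x => norm_nonneg _)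
      _ = ‖h‖ := (L1.norm_eq_integral_norm h).symm
  -- gliding hump: contradiction
  obtain ⟨N, hN⟩ := glidingHump M hM φ hφsum (ε/2) (by positivity)
  have h1 := hN N le_rfl (ff N) (hfM N)
  have h2 := hφdiag N
  have h3 : φ N (ff N) ≤ |φ N (ff N)| := le_abs_self _
  rw [hδdef] at h2
  linarith
end

section
/- Every f ∈ L¹([0,1];Y) (Y a Banach space) lies in some Orlicz space: there exists a Young function F (depending on f) such that ∫₀¹ F(‖f(t)‖_Y) dt < ∞. -/
/-!
De la Vallée Poussin's construction. For integrable `g` the tail integrals `∫ (g - c)⁺`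
tend to `0` as `c → ∞`, so there are thresholds `cₖ ≥ k + 1` with `∫ (g - cₖ)⁺ ≤ 2⁻ᵏ`.
Then `F t = ∑ₖ (t - cₖ)⁺` is a locally finite sum of convex increasing hinge functions, hence
continuous, convex and increasing; it vanishes on `[0, 1]`, its slope beyond `c₀, …, c_{K-1}`
is at least `K`, and `∫ F ∘ g = ∑ₖ ∫ (g - cₖ)⁺ ≤ 2` by monotone convergence.
-/

open MeasureTheory Filter Topology

noncomputable def hingeSum (c : ℕ → ℝ) (t : ℝ) : ℝ :=
  ∑' k, max (t - c k) 0

namespace hingeSum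

variable {c : ℕ → ℝ}

lemma nonneg (c : ℕ → ℝ) (t : ℝ) : 0 ≤ hingeSum c t :=
  tsum_nonneg fun _ => le_max_right _ _

lemma term_eq_zero (hc : ∀ k : ℕ, (k : ℝ) + 1 ≤ c k) {t : ℝ} {k : ℕ} (ht : t ≤ k + 1) :
    max (t - c k) 0 = 0 :=
  max_eq_right (by linarith [hc k])

lemma summable (hc : ∀ k : ℕ, (k : ℝ) + 1 ≤ c k) (t : ℝ) :
    Summable fun k => max (t - c k) 0 := by
  obtain ⟨N, hN⟩ := exists_nat_ge t
  refine summable_of_ne_finset_zero (s := Finset.range N) fun k hk => term_eq_zero hc ?_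
  have : (N : ℝ) ≤ k := by exact_mod_cast (by simpa using hk : N ≤ k)
  linarith

lemma eq_sum_range (hc : ∀ k : ℕ, (k : ℝ) + 1 ≤ c k) {t : ℝ} {N : ℕ} (htN : t ≤ N) :
    hingeSum c t = ∑ k ∈ Finset.range N, max (t - c k) 0 := by
  refine tsum_eq_sum fun k hk => term_eq_zero hc ?_
  have : (N : ℝ) ≤ k := by exact_mod_cast (by simpa using hk : N ≤ k)
  linarith

lemma eq_zero_of_le_one (hc : ∀ k : ℕ, (k : ℝ) + 1 ≤ c k) {t : ℝ} (ht : t ≤ 1) :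
    hingeSum c t = 0 := by
  have : ∀ k : ℕ, max (t - c k) 0 = 0 := fun k =>
    term_eq_zero hc (by linarith [k.cast_nonneg (α := ℝ)])
  simp [hingeSum, this]

lemma continuous (hc : ∀ k : ℕ, (k : ℝ) + 1 ≤ c k) : Continuous (hingeSum c) := by
  refine continuous_iff_continuousAt.mpr fun x => ?_
  obtain ⟨N, hN⟩ := exists_nat_gt x
  have hsum : Continuous fun t => ∑ k ∈ Finset.range N, max (t - c k) 0 := by fun_prop
  refine hsum.continuousAt.congr ?_
  filter_upwards [eventually_lt_nhds hN] with y hy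
  exact (eq_sum_range hc hy.le).symm

lemma monotone (hc : ∀ k : ℕ, (k : ℝ) + 1 ≤ c k) : Monotone (hingeSum c) := fun _ _ hxy =>
  (summable hc _).tsum_le_tsum (fun _ => max_le_max (by linarith) le_rfl) (summable hc _)

lemma convexOn (hc : ∀ k : ℕ, (k : ℝ) + 1 ≤ c k) : ConvexOn ℝ Set.univ (hingeSum c) := by
  refine ⟨convex_univ, fun x _ y _ a b ha hb hab => ?_⟩
  have hinge (k : ℕ) : ConvexOn ℝ Set.univ fun t : ℝ => max (t - c k) 0 :=
    ((convexOn_id convex_univ).sub (concaveOn_const _ convex_univ)).sup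
      (convexOn_const 0 convex_univ)
  calc hingeSum c (a • x + b • y)
      ≤ ∑' k, (a * max (x - c k) 0 + b * max (y - c k) 0) :=
        (summable hc _).tsum_le_tsum
          (fun k => (hinge k).2 (Set.mem_univ x) (Set.mem_univ y) ha hb hab)
          (((summable hc x).mul_left a).add ((summable hc y).mul_left b))
    _ = a • hingeSum c x + b • hingeSum c y := by
        rw [Summable.tsum_add ((summable hc x).mul_left a) ((summable hc y).mul_left b),
          tsum_mul_left, tsum_mul_left, smul_eq_mul, smul_eq_mul, hingeSum, hingeSum]

lemma tendsto_div_nhdsGT_zero (hc : ∀ k : ℕ, (k : ℝ) + 1 ≤ c k) :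
    Tendsto (fun t => hingeSum c t / t) (𝓝[>] 0) (𝓝 0) := by
  refine tendsto_const_nhds.congr' ?_
  filter_upwards [Ioo_mem_nhdsGT (zero_lt_one' ℝ)] with t ht
  rw [eq_zero_of_le_one hc ht.2.le, zero_div]

lemma natCast_mul_sub_sum_le (hc : ∀ k : ℕ, (k : ℝ) + 1 ≤ c k) (K : ℕ) (t : ℝ) :
    K * t - ∑ k ∈ Finset.range K, c k ≤ hingeSum c t := by
  calc K * t - ∑ k ∈ Finset.range K, c k = ∑ k ∈ Finset.range K, (t - c k) := by
        rw [Finset.sum_sub_distrib, Finset.sum_const, Finset.card_range, nsmul_eq_mul]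
    _ ≤ ∑ k ∈ Finset.range K, max (t - c k) 0 := Finset.sum_le_sum fun k _ => le_max_left _ _
    _ ≤ hingeSum c t := (summable hc t).sum_le_tsum _ fun k _ => le_max_right _ _

lemma tendsto_div_atTop (hc : ∀ k : ℕ, (k : ℝ) + 1 ≤ c k) :
    Tendsto (fun t => hingeSum c t / t) atTop atTop := by
  refine tendsto_atTop.mpr fun M => ?_
  obtain ⟨K, hK⟩ := exists_nat_ge (M + 1)
  set C := ∑ k ∈ Finset.range K, c k
  filter_upwards [eventually_ge_atTop (max C 1)] with t ht
  have ht1 : 1 ≤ t := le_of_max_le_right ht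
  have htC : C ≤ t := le_of_max_le_left ht
  rw [le_div_iff₀ (by linarith)]
  nlinarith [natCast_mul_sub_sum_le hc K t]

end hingeSum

section TailIntegrals

variable {α : Type*} [MeasurableSpace α] {μ : Measure α} {g : α → ℝ}

lemma norm_max_sub_zero_le (y : ℝ) {c : ℝ} (hc : 0 ≤ c) : ‖max (y - c) 0‖ ≤ ‖y‖ := by
  rw [Real.norm_of_nonneg (le_max_right _ _), Real.norm_eq_abs]
  exact max_le (by linarith [le_abs_self y]) (abs_nonneg y)

lemma MeasureTheory.Integrable.max_sub_const_zero (hg : Integrable g μ) {c : ℝ} (hc : 0 ≤ c) :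
    Integrable (fun x => max (g x - c) 0) μ :=
  hg.norm.mono' ((hg.1.sub aestronglyMeasurable_const).sup aestronglyMeasurable_const)
    (ae_of_all _ fun _ => norm_max_sub_zero_le _ hc)

lemma tendsto_integral_max_sub_natCast_zero (hg : Integrable g μ) :
    Tendsto (fun n : ℕ => ∫ x, max (g x - n) 0 ∂μ) atTop (𝓝 0) := by
  have hlim : ∀ x, Tendsto (fun n : ℕ => max (g x - n) 0) atTop (𝓝 0) := fun x => by
    refine tendsto_const_nhds.congr' ?_
    filter_upwards [tendsto_natCast_atTop_atTop.eventually_ge_atTop (g x)] with n hn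
    exact (max_eq_right (by linarith)).symm
  simpa using tendsto_integral_of_dominated_convergence (fun x => ‖g x‖)
    (fun n => (hg.max_sub_const_zero n.cast_nonneg).1) hg.norm
    (fun n => ae_of_all _ fun x => norm_max_sub_zero_le _ n.cast_nonneg) (ae_of_all _ hlim)

lemma exists_thresholds_integral_max_sub_le (hg : Integrable g μ) :
    ∃ c : ℕ → ℝ, (∀ k : ℕ, (k : ℝ) + 1 ≤ c k) ∧
      ∀ k, ∫ x, max (g x - c k) 0 ∂μ ≤ (1 / 2) ^ k := by
  have h (k : ℕ) : ∃ n : ℕ, k + 1 ≤ n ∧ ∫ x, max (g x - n) 0 ∂μ ≤ (1 / 2 : ℝ) ^ k :=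
    ((eventually_ge_atTop (k + 1)).and ((tendsto_integral_max_sub_natCast_zero hg).eventually
      (eventually_le_nhds (by positivity)))).exists
  choose n hn using h
  exact ⟨fun k => n k, fun k => by simpa using (Nat.cast_le (α := ℝ)).mpr (hn k).1,
    fun k => (hn k).2⟩

lemma integrable_hingeSum_comp (hg : Integrable g μ) {c : ℕ → ℝ}
    (hc : ∀ k : ℕ, (k : ℝ) + 1 ≤ c k) (hsum : Summable fun k => ∫ x, max (g x - c k) 0 ∂μ) :
    Integrable (fun x => hingeSum c (g x)) μ := by
  have hint (k : ℕ) : Integrable (fun x => max (g x - c k) 0) μ :=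
    hg.max_sub_const_zero (by linarith [hc k, k.cast_nonneg (α := ℝ)])
  refine ⟨(hingeSum.continuous hc).comp_aestronglyMeasurable hg.1, ?_⟩
  rw [hasFiniteIntegral_iff_ofReal (ae_of_all _ fun x => hingeSum.nonneg c _)]
  calc ∫⁻ x, ENNReal.ofReal (hingeSum c (g x)) ∂μ
      = ∫⁻ x, ∑' k, ENNReal.ofReal (max (g x - c k) 0) ∂μ :=
        lintegral_congr fun x => ENNReal.ofReal_tsum_of_nonneg (fun k => le_max_right _ _)
          (hingeSum.summable hc _)
    _ = ∑' k, ∫⁻ x, ENNReal.ofReal (max (g x - c k) 0) ∂μ :=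
        lintegral_tsum fun k => (hint k).1.aemeasurable.ennreal_ofReal
    _ = ∑' k, ENNReal.ofReal (∫ x, max (g x - c k) 0 ∂μ) := tsum_congr fun k =>
        (ofReal_integral_eq_lintegral_ofReal (hint k) (ae_of_all _ fun x => le_max_right _ _)).symm
    _ = ENNReal.ofReal (∑' k, ∫ x, max (g x - c k) 0 ∂μ) :=
        (ENNReal.ofReal_tsum_of_nonneg (fun _ => integral_nonneg fun _ => le_max_right _ _)
          hsum).symm
    _ < ⊤ := ENNReal.ofReal_lt_top

theorem exists_integrable_hingeSum_comp (hg : Integrable g μ) :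
    ∃ c : ℕ → ℝ, (∀ k : ℕ, (k : ℝ) + 1 ≤ c k) ∧ Integrable (fun x => hingeSum c (g x)) μ := by
  obtain ⟨c, hc, hle⟩ := exists_thresholds_integral_max_sub_le hg
  refine ⟨c, hc, integrable_hingeSum_comp hg hc ?_⟩
  exact (summable_geometric_of_lt_one (by norm_num) (by norm_num)).of_nonneg_of_le
    (fun k => integral_nonneg fun x => le_max_right _ _) hle

end TailIntegrals

theorem stmt_5_general
    (Y : Type*) [NormedAddCommGroup Y]
    (f : ℝ → Y) (hf : IntegrableOn f (Set.Icc (0:ℝ) 1)) :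
    ∃ F : ℝ → ℝ,
      (∀ t ≥ (0:ℝ), 0 ≤ F t) ∧
      ConvexOn ℝ (Set.Ici 0) F ∧
      ContinuousOn F (Set.Ici 0) ∧
      MonotoneOn F (Set.Ici 0) ∧
      Tendsto (fun t => F t / t) (𝓝[>] 0) (𝓝 0) ∧
      Tendsto (fun t => F t / t) atTop atTop ∧
      IntegrableOn (fun t => F ‖f t‖) (Set.Icc (0:ℝ) 1) := by
  obtain ⟨c, hc, hint⟩ := exists_integrable_hingeSum_comp hf.norm
  exact ⟨hingeSum c, fun t _ => hingeSum.nonneg c t,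
    (hingeSum.convexOn hc).subset (Set.subset_univ _) (convex_Ici 0),
    (hingeSum.continuous hc).continuousOn, (hingeSum.monotone hc).monotoneOn _,
    hingeSum.tendsto_div_nhdsGT_zero hc, hingeSum.tendsto_div_atTop hc, hint⟩

/-- every `f ∈ L¹([0,1];Y)` lies in some Orlicz space: there is a Young
function `F` (depending on `f`) with `∫₀¹ F(‖f(t)‖) dt < ∞`. -/
theorem stmt_5
    (Y : Type*) [NormedAddCommGroup Y] [NormedSpace ℝ Y] [CompleteSpace Y]
    (f : ℝ → Y) (hf : IntegrableOn f (Set.Icc (0:ℝ) 1)) :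
    ∃ F : ℝ → ℝ,
      (∀ t ≥ (0:ℝ), 0 ≤ F t) ∧
      ConvexOn ℝ (Set.Ici 0) F ∧
      ContinuousOn F (Set.Ici 0) ∧
      MonotoneOn F (Set.Ici 0) ∧
      Tendsto (fun t => F t / t) (𝓝[>] 0) (𝓝 0) ∧
      Tendsto (fun t => F t / t) atTop atTop ∧
      IntegrableOn (fun t => F ‖f t‖) (Set.Icc (0:ℝ) 1) :=
  stmt_5_general Y f hf
end

section
/- For the diagonal semigroup (T(t)w)ₙ = e^{-nt} wₙ on W = ℓ¹ with generator A = diag(−n), and the observation operator C w = Σₙ n wₙ defined on D(A), the map Ψ^{(ε)} : w ↦ (t ↦ Σₙ n e^{-nt} wₙ) is bounded from ℓ¹ to L¹([0,ε]) with operator norm exactly 1 for every ε > 0; in particular C is L¹-admissible but not zero-class L¹-admissible. -/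
open MeasureTheory Filter Topology

/-- The observation map of the diagonal semigroup `(T(t)w)ₙ = e^{-nt}wₙ` on `ℓ¹`
with observation `Cw = Σₙ n wₙ`:  `(Ψ w)(t) = Σₙ n e^{-nt} wₙ` (indices `n ≥ 1`). -/
noncomputable def diagObs (w : lp (fun _ : ℕ => ℝ) 1) (t : ℝ) : ℝ :=
  ∑' n : ℕ, ((n : ℝ) + 1) * Real.exp (-((n : ℝ) + 1) * t) * w n

section aux

lemma aux_cont (a c : ℝ) : Continuous (fun t : ℝ => a * Real.exp (-a * t) * c) := by
  continuity

lemma aux_integral (a ε : ℝ) (ha : 0 < a) (hε : 0 ≤ ε) :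
    ∫ t in Set.Icc (0:ℝ) ε, a * Real.exp (-a * t) = 1 - Real.exp (-a * ε) := by
  rw [MeasureTheory.integral_Icc_eq_integral_Ioc, ← intervalIntegral.integral_of_le hε]
  have hder : ∀ t ∈ Set.uIcc (0:ℝ) ε,
      HasDerivAt (fun t => -Real.exp (-a * t)) (a * Real.exp (-a * t)) t := by
    intro t _
    have h1 : HasDerivAt (fun t : ℝ => -a * t) (-a) t := by
      simpa using (hasDerivAt_id t).const_mul (-a)
    have h2 := h1.exp.neg
    refine h2.congr_deriv ?_
    ring
  rw [intervalIntegral.integral_eq_sub_of_hasDerivAt hder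
      ((by continuity : Continuous fun t : ℝ => a * Real.exp (-a * t)).intervalIntegrable 0 ε)]
  simp only [mul_zero, neg_zero, Real.exp_zero]
  ring

lemma aux_bound {a t : ℝ} (ha : 0 < a) (ht : 0 < t) : a * Real.exp (-a * t) ≤ 1 / t := by
  rw [le_div_iff₀ ht]
  have h2 : a * t ≤ Real.exp (a * t) := by
    have := Real.add_one_le_exp (a * t); linarith
  calc a * Real.exp (-a * t) * t = (a * t) * Real.exp (-(a * t)) := by ring
    _ ≤ Real.exp (a * t) * Real.exp (-(a * t)) :=
        mul_le_mul_of_nonneg_right h2 (Real.exp_nonneg _)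
    _ = 1 := by rw [← Real.exp_add, add_neg_cancel, Real.exp_zero]

end aux

set_option maxHeartbeats 1000000 in
/-- for the diagonal semigroup on `ℓ¹` and the observation operator
`Cw = Σ n wₙ`, the map `w ↦ Σₙ n e^{-nt} wₙ` is bounded `ℓ¹ → L¹([0,ε])` with
operator norm exactly `1` for every `ε > 0`; in particular `C` is `L¹`-admissible
but not zero-class `L¹`-admissible. -/
theorem stmt_14 :
    ∀ ε > (0:ℝ),
      (∀ w : lp (fun _ : ℕ => ℝ) 1, IntegrableOn (diagObs w) (Set.Icc 0 ε)) ∧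
      (∀ w : lp (fun _ : ℕ => ℝ) 1,
        ∫ t in Set.Icc (0:ℝ) ε, |diagObs w t| ≤ 1 * ‖w‖) ∧
      (∀ c : ℝ, (∀ w : lp (fun _ : ℕ => ℝ) 1,
        ∫ t in Set.Icc (0:ℝ) ε, |diagObs w t| ≤ c * ‖w‖) → 1 ≤ c) := by
  intro ε hε
  set μ : Measure ℝ := volume.restrict (Set.Icc (0:ℝ) ε) with hμ
  have hres : volume.restrict (Set.Ioc (0:ℝ) ε) = μ :=
    Measure.restrict_congr_set Ioc_ae_eq_Icc
  have hpos : ∀ᵐ t ∂μ, 0 < t := by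
    rw [← hres]
    filter_upwards [ae_restrict_mem measurableSet_Ioc] with t ht
    exact ht.1
  -- common facts for a fixed w
  have main : ∀ w : lp (fun _ : ℕ => ℝ) 1,
      AEStronglyMeasurable (diagObs w) μ ∧
      ∫⁻ t, ENNReal.ofReal |diagObs w t| ∂μ ≤ ENNReal.ofReal ‖w‖ := by
    intro w
    set F : ℕ → ℝ → ℝ := fun n t => ((n:ℝ) + 1) * Real.exp (-((n:ℝ) + 1) * t) * w n with hF
    have hFcont : ∀ n, Continuous (F n) := fun n => aux_cont _ _
    have hwsum : Summable (fun n : ℕ => |w n|) := by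
      have := (lp.memℓp w).summable (p := 1) (by simp)
      simpa [Real.norm_eq_abs] using this
    have hnorm : ‖w‖ = ∑' n : ℕ, |w n| := by
      have := lp.norm_eq_tsum_rpow (p := 1) (by simp) w
      simpa [Real.norm_eq_abs] using this
    have habs : ∀ n t, |F n t| = ((n:ℝ) + 1) * Real.exp (-((n:ℝ) + 1) * t) * |w n| := by
      intro n t
      rw [hF, abs_mul, abs_mul]
      have h1 : (0:ℝ) < (n:ℝ) + 1 := by positivity
      rw [abs_of_pos h1, abs_of_pos (Real.exp_pos _)]
    have hFsumm : ∀ t : ℝ, 0 < t → Summable (fun n => |F n t|) := by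
      intro t ht
      apply Summable.of_nonneg_of_le (fun n => abs_nonneg _) _ (hwsum.mul_left (1 / t))
      intro n
      rw [habs]
      exact mul_le_mul_of_nonneg_right (aux_bound (by positivity) ht) (abs_nonneg _)
    have hdiag : ∀ t, diagObs w t = ∑' n, F n t := fun t => rfl
    -- a.e. strong measurability
    have haesm : AEStronglyMeasurable (diagObs w) μ := by
      apply aestronglyMeasurable_of_tendsto_ae (f := fun N t => ∑ n ∈ Finset.range N, F n t) atTop
      · intro N
        exact (continuous_finset_sum _ fun n _ => hFcont n).aestronglyMeasurable
      · filter_upwards [hpos] with t ht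
        rw [hdiag]
        exact ((hFsumm t ht).of_abs).hasSum.tendsto_sum_nat
    refine ⟨haesm, ?_⟩
    -- each piece is integrable on Icc with explicit integral
    have hFint : ∀ n : ℕ, Integrable (fun t => |F n t|) μ := fun n =>
      ((hFcont n).abs.integrableOn_Icc)
    have hFval : ∀ n : ℕ,
        ∫ t, |F n t| ∂μ = (1 - Real.exp (-((n:ℝ) + 1) * ε)) * |w n| := by
      intro n
      simp_rw [habs]
      rw [hμ, MeasureTheory.integral_mul_const,
        aux_integral ((n:ℝ)+1) ε (by positivity) hε.le]
    calc ∫⁻ t, ENNReal.ofReal |diagObs w t| ∂μ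
        ≤ ∫⁻ t, ∑' n, ENNReal.ofReal |F n t| ∂μ := by
          apply lintegral_mono_ae
          filter_upwards [hpos] with t ht
          have hs := hFsumm t ht
          rw [hdiag, ← ENNReal.ofReal_tsum_of_nonneg (fun n => abs_nonneg _) hs]
          apply ENNReal.ofReal_le_ofReal
          calc |∑' n, F n t| = ‖∑' n, F n t‖ := (Real.norm_eq_abs _).symm
            _ ≤ ∑' n, ‖F n t‖ := norm_tsum_le_tsum_norm (by simpa [Real.norm_eq_abs] using hs)
            _ = ∑' n, |F n t| := by simp [Real.norm_eq_abs]
      _ = ∑' n, ∫⁻ t, ENNReal.ofReal |F n t| ∂μ := by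
          apply lintegral_tsum
          intro n
          exact (ENNReal.measurable_ofReal.comp (hFcont n).abs.measurable).aemeasurable
      _ = ∑' n : ℕ, ENNReal.ofReal ((1 - Real.exp (-((n:ℝ) + 1) * ε)) * |w n|) := by
          refine tsum_congr fun n => ?_
          rw [← hFval n, ← ofReal_integral_eq_lintegral_ofReal (hFint n)
            (ae_of_all _ fun t => abs_nonneg _)]
      _ ≤ ∑' n, ENNReal.ofReal |w n| := by
          apply ENNReal.tsum_le_tsum
          intro n
          apply ENNReal.ofReal_le_ofReal
          have h1 : 1 - Real.exp (-((n:ℝ) + 1) * ε) ≤ 1 := by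
            have := Real.exp_nonneg (-((n:ℝ) + 1) * ε); linarith
          calc (1 - Real.exp (-((n:ℝ) + 1) * ε)) * |w n| ≤ 1 * |w n| :=
                mul_le_mul_of_nonneg_right h1 (abs_nonneg _)
            _ = |w n| := one_mul _
      _ = ENNReal.ofReal ‖w‖ := by
          rw [hnorm, ENNReal.ofReal_tsum_of_nonneg (fun n => abs_nonneg _) hwsum]
  have hint : ∀ w : lp (fun _ : ℕ => ℝ) 1, IntegrableOn (diagObs w) (Set.Icc 0 ε) := by
    intro w
    obtain ⟨haesm, hbound⟩ := main w
    refine ⟨haesm, ?_⟩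
    rw [HasFiniteIntegral]
    calc ∫⁻ t, ‖diagObs w t‖₊ ∂μ = ∫⁻ t, ENNReal.ofReal |diagObs w t| ∂μ := by
          congr 1; funext t
          exact Real.enorm_eq_ofReal_abs _
      _ ≤ ENNReal.ofReal ‖w‖ := hbound
      _ < ⊤ := ENNReal.ofReal_lt_top
  refine ⟨hint, ?_, ?_⟩
  · intro w
    obtain ⟨haesm, hbound⟩ := main w
    rw [one_mul]
    have habs : AEStronglyMeasurable (fun t => |diagObs w t|) μ := by
      simpa [Real.norm_eq_abs] using haesm.norm
    rw [show (∫ t in Set.Icc (0:ℝ) ε, |diagObs w t|) = ∫ t, |diagObs w t| ∂μ from rfl,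
      integral_eq_lintegral_of_nonneg_ae (ae_of_all _ fun t => abs_nonneg _) habs]
    calc (∫⁻ t, ENNReal.ofReal |diagObs w t| ∂μ).toReal
        ≤ (ENNReal.ofReal ‖w‖).toReal := ENNReal.toReal_mono ENNReal.ofReal_ne_top hbound
      _ = ‖w‖ := ENNReal.toReal_ofReal (norm_nonneg _)
  · intro c hc
    have hkey : ∀ k : ℕ, 1 - Real.exp (-((k:ℝ) + 1) * ε) ≤ c := by
      intro k
      have hsingle := hc (lp.single 1 k (1:ℝ) : lp (fun _ : ℕ => ℝ) 1)
      have hne : ‖(lp.single 1 k ((fun _ : ℕ => (1:ℝ)) k) : lp (fun _ : ℕ => ℝ) 1)‖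
          = ‖(fun _ : ℕ => (1:ℝ)) k‖ :=
        lp.norm_single (E := fun _ : ℕ => ℝ) zero_lt_one k ((fun _ : ℕ => (1:ℝ)) k)
      have hnorm1 : ‖(lp.single 1 k (1:ℝ) : lp (fun _ : ℕ => ℝ) 1)‖ = 1 := by
        rw [hne]; exact norm_one
      have hval : ∀ t : ℝ, diagObs (lp.single 1 k (1:ℝ) : lp (fun _ : ℕ => ℝ) 1) t
          = ((k:ℝ) + 1) * Real.exp (-((k:ℝ) + 1) * t) := by
        intro t
        rw [diagObs]
        rw [tsum_eq_single k]
        · rw [lp.single_apply_self, mul_one]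
        · intro n hn
          rw [lp.single_apply_ne 1 k _ hn, mul_zero]
      have hcalc : ∫ t in Set.Icc (0:ℝ) ε, |diagObs (lp.single 1 k (1:ℝ) : lp (fun _ : ℕ => ℝ) 1) t|
          = 1 - Real.exp (-((k:ℝ) + 1) * ε) := by
        have : ∀ t : ℝ, |diagObs (lp.single 1 k (1:ℝ) : lp (fun _ : ℕ => ℝ) 1) t|
            = ((k:ℝ) + 1) * Real.exp (-((k:ℝ) + 1) * t) := by
          intro t
          rw [hval t, abs_of_pos (by positivity)]
        simp_rw [this]
        exact aux_integral ((k:ℝ)+1) ε (by positivity) hε.le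
      rw [hcalc, hnorm1, mul_one] at hsingle
      exact hsingle
    have hlim : Tendsto (fun k : ℕ => 1 - Real.exp (-((k:ℝ) + 1) * ε)) atTop (𝓝 1) := by
      have h1 : Tendsto (fun k : ℕ => -((k:ℝ) + 1) * ε) atTop atBot := by
        have h2 : Tendsto (fun k : ℕ => ((k:ℝ) + 1) * ε) atTop atTop :=
          (tendsto_atTop_add_const_right atTop 1 tendsto_natCast_atTop_atTop).atTop_mul_const hε
        have h4 := tendsto_neg_atTop_atBot.comp h2
        refine h4.congr fun k => ?_
        simp [Function.comp]
        ring
      have h3 : Tendsto (fun k : ℕ => Real.exp (-((k:ℝ) + 1) * ε)) atTop (𝓝 0) :=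
        Real.tendsto_exp_atBot.comp h1
      simpa using tendsto_const_nhds.sub h3
    exact le_of_tendsto' hlim hkey
end
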